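/- arXiv:nlin/0105023 — 16 statements merged into one kernel-verified Lean document; each statement's English description precedes it below -/
import Mathlib

section
/- Let A, B, C be three affinely independent points of the complex plane ℂ (regarded as a real affine plane), let t, u, v be real numbers with t, u, v ∉ {0, 1}, and set F = (1−t)·A + t·B, D = (1−u)·B + u·C, E = (1−v)·C + v·A. Then the three points D, E, F are collinear (over ℝ) if and only if t·u·v = −(1−t)·(1−u)·(1−v). -/
/-- Collinearity of three points of `ℂ` over `ℝ` is equivalent to the vanishing of
the real cross product of the difference vectors. -/
lemma collinear_iff_cross (p q r : ℂ) :
    Collinear ℝ ({p, q, r} : Set ℂ) ↔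
      (q - p).re * (r - p).im - (q - p).im * (r - p).re = 0 := by
  constructor
  · intro h
    rw [collinear_iff_of_mem (Set.mem_insert p _)] at h
    obtain ⟨w, hw⟩ := h
    obtain ⟨a, ha⟩ := hw q (by simp)
    obtain ⟨b, hb⟩ := hw r (by simp)
    have hq : q - p = a • w := by rw [ha]; simp [vadd_eq_add]
    have hr : r - p = b • w := by rw [hb]; simp [vadd_eq_add]
    rw [hq, hr]
    simp [Complex.real_smul, Complex.mul_re, Complex.mul_im]
    ring
  · intro h
    by_cases hqp : q = p
    · subst hqp
      have : ({q, q, r} : Set ℂ) = {q, r} := by simp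
      rw [this]
      exact collinear_pair ℝ q r
    · have hw : q - p ≠ 0 := sub_ne_zero.mpr hqp
      have hN : (q - p).re ^ 2 + (q - p).im ^ 2 ≠ 0 := by
        have := Complex.normSq_pos.mpr hw
        rw [Complex.normSq_apply] at this
        nlinarith
      set c : ℝ := ((r - p).re * (q - p).re + (r - p).im * (q - p).im) /
        ((q - p).re ^ 2 + (q - p).im ^ 2) with hc
      have hN' : (q.re - p.re) ^ 2 + (q.im - p.im) ^ 2 ≠ 0 := by simpa using hN
      have h' : (q.re - p.re) * (r.im - p.im) - (q.im - p.im) * (r.re - p.re) = 0 := by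
        simpa using h
      have hr : r - p = c • (q - p) := by
        rw [hc]
        apply Complex.ext
        · rw [Complex.real_smul, Complex.mul_re, Complex.ofReal_re, Complex.ofReal_im]
          simp only [Complex.sub_re, Complex.sub_im]
          rw [zero_mul, sub_zero, div_mul_eq_mul_div, eq_div_iff hN']
          linear_combination (-(q.im - p.im)) * h'
        · rw [Complex.real_smul, Complex.mul_im, Complex.ofReal_re, Complex.ofReal_im]
          simp only [Complex.sub_re, Complex.sub_im]
          rw [zero_mul, add_zero, div_mul_eq_mul_div, eq_div_iff hN']
          linear_combination (q.re - p.re) * h'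
      rw [collinear_iff_of_mem (Set.mem_insert p _)]
      refine ⟨q - p, ?_⟩
      intro x hx
      rcases hx with rfl | rfl | rfl
      · exact ⟨0, by simp [vadd_eq_add]⟩
      · exact ⟨1, by simp [vadd_eq_add]⟩
      · exact ⟨c, by rw [vadd_eq_add, ← hr]; ring⟩

/-- **Menelaus' theorem** on the complex plane, regarded as a real affine plane. -/
theorem menelaus_complex
    (A B C : ℂ) (hABC : AffineIndependent ℝ ![A, B, C])
    (t u v : ℝ) (ht0 : t ≠ 0) (ht1 : t ≠ 1) (hu0 : u ≠ 0) (hu1 : u ≠ 1)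
    (hv0 : v ≠ 0) (hv1 : v ≠ 1)
    (F D E : ℂ)
    (hF : F = (1 - t) • A + t • B)
    (hD : D = (1 - u) • B + u • C)
    (hE : E = (1 - v) • C + v • A) :
    Collinear ℝ ({D, E, F} : Set ℂ) ↔
      t * u * v = -((1 - t) * (1 - u) * (1 - v)) := by
  have hK : (B - A).re * (C - A).im - (B - A).im * (C - A).re ≠ 0 := by
    intro hzero
    rw [affineIndependent_iff_not_collinear_set] at hABC
    exact hABC ((collinear_iff_cross A B C).mpr hzero)
  have key : (E - D).re * (F - D).im - (E - D).im * (F - D).re =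
      (t * u * v + (1 - t) * (1 - u) * (1 - v)) *
        ((B - A).re * (C - A).im - (B - A).im * (C - A).re) := by
    subst hD hE hF
    simp [Complex.real_smul, Complex.mul_re, Complex.mul_im]
    ring
  rw [collinear_iff_cross, key, mul_eq_zero]
  constructor
  · rintro (h | h)
    · linarith
    · exact absurd h hK
  · intro h
    left
    linarith
end

section
/- Let Φ: ℤ³ → ℂ be a lattice such that at every lattice point the six differences appearing in the multi-ratio M(Φ_1,Φ_12,Φ_2,Φ_23,Φ_3,Φ_13) and the differences Φ_12−Φ_2, Φ_23−Φ_3, Φ_13−Φ_1 are nonzero, and define the shape parameters α = (Φ_12−Φ_1)/(Φ_12−Φ_2), β = (Φ_23−Φ_2)/(Φ_23−Φ_3), γ = (Φ_13−Φ_3)/(Φ_13−Φ_1) as functions on ℤ³. Then Φ satisfies the discrete Schwarzian KP equation at every lattice point if and only if at every lattice point the shape parameters satisfy α·β·γ = 1, α_3·β_1·γ_2 = 1 and (α_3·β_1 − 1)(α − 1) = (α·β − 1)(α_3 − 1), where α_3, β_1, γ_2 denote the shifts of α, β, γ by e_3, e_1, e_2 respectively. -/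
/-- The multi-ratio of six complex numbers. -/
noncomputable def multiRatio (P1 P2 P3 P4 P5 P6 : ℂ) : ℂ :=
  ((P1 - P2) * (P3 - P4) * (P5 - P6)) / ((P2 - P3) * (P4 - P5) * (P6 - P1))

/-- The first standard basis vector of the lattice ℤ³. -/
def e1 : ℤ × ℤ × ℤ := (1, 0, 0)
/-- The second standard basis vector of the lattice ℤ³. -/
def e2 : ℤ × ℤ × ℤ := (0, 1, 0)
/-- The third standard basis vector of the lattice ℤ³. -/
def e3 : ℤ × ℤ × ℤ := (0, 0, 1)


private lemma dskp_third_aux (a b c d e f g : ℂ) (hbc : b - c ≠ 0) (hde : d - e ≠ 0)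
    (hgd : g - d ≠ 0) (hgf : g - f ≠ 0)
    (hD : (a - b) * (c - d) * (e - f) = -1 * ((b - c) * (d - e) * (f - a))) :
    ((g - f)/(g - d) * ((g - b)/(g - f)) - 1) * ((b - a)/(b - c) - 1)
      = ((b - a)/(b - c) * ((d - c)/(d - e)) - 1) * ((g - f)/(g - d) - 1) := by
  have hE : (d - b) * (c - a) * (d - e) = ((b - a) * (d - c) - (b - c) * (d - e)) * (d - f) := by
    linear_combination -hD
  have L : ((g - f)/(g - d) * ((g - b)/(g - f)) - 1) * ((b - a)/(b - c) - 1)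
      = ((d - b) * (c - a)) / ((g - d) * (b - c)) := by
    field_simp
    ring
  have R : ((b - a)/(b - c) * ((d - c)/(d - e)) - 1) * ((g - f)/(g - d) - 1)
      = (((b - a) * (d - c) - (b - c) * (d - e)) * (d - f)) / ((b - c) * (d - e) * (g - d)) := by
    field_simp
    ring
  rw [L, R, div_eq_div_iff (mul_ne_zero hgd hbc) (mul_ne_zero (mul_ne_zero hbc hde) hgd)]
  linear_combination (g - d) * (b - c) * hE

/-- A lattice `Φ : ℤ³ → ℂ` satisfies the discrete Schwarzian KP equation at every
lattice point if and only if its shape parameters `α, β, γ` satisfy the shape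
equations `α·β·γ = 1`, `α₃·β₁·γ₂ = 1` and `(α₃·β₁ − 1)(α − 1) = (α·β − 1)(α₃ − 1)`
at every lattice point. -/
theorem dskp_iff_shape_equations
    (Φ : ℤ × ℤ × ℤ → ℂ)
    (hne : ∀ n : ℤ × ℤ × ℤ,
      Φ (n + e1) - Φ (n + e1 + e2) ≠ 0 ∧ Φ (n + e1 + e2) - Φ (n + e2) ≠ 0 ∧
      Φ (n + e2) - Φ (n + e2 + e3) ≠ 0 ∧ Φ (n + e2 + e3) - Φ (n + e3) ≠ 0 ∧
      Φ (n + e3) - Φ (n + e1 + e3) ≠ 0 ∧ Φ (n + e1 + e3) - Φ (n + e1) ≠ 0)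
    (α β γ : ℤ × ℤ × ℤ → ℂ)
    (hα : ∀ n, α n = (Φ (n + e1 + e2) - Φ (n + e1)) / (Φ (n + e1 + e2) - Φ (n + e2)))
    (hβ : ∀ n, β n = (Φ (n + e2 + e3) - Φ (n + e2)) / (Φ (n + e2 + e3) - Φ (n + e3)))
    (hγ : ∀ n, γ n = (Φ (n + e1 + e3) - Φ (n + e3)) / (Φ (n + e1 + e3) - Φ (n + e1))) :
    (∀ n : ℤ × ℤ × ℤ,
      multiRatio (Φ (n + e1)) (Φ (n + e1 + e2)) (Φ (n + e2)) (Φ (n + e2 + e3))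
        (Φ (n + e3)) (Φ (n + e1 + e3)) = -1) ↔
    (∀ n : ℤ × ℤ × ℤ,
      α n * β n * γ n = 1 ∧
      α (n + e3) * β (n + e1) * γ (n + e2) = 1 ∧
      (α (n + e3) * β (n + e1) - 1) * (α n - 1) =
        (α n * β n - 1) * (α (n + e3) - 1)) := by
  have perm31 : ∀ n : ℤ × ℤ × ℤ, n + e3 + e1 = n + e1 + e3 := fun n => add_right_comm n e3 e1
  have perm32 : ∀ n : ℤ × ℤ × ℤ, n + e3 + e2 = n + e2 + e3 := fun n => add_right_comm n e3 e2
  have perm21 : ∀ n : ℤ × ℤ × ℤ, n + e2 + e1 = n + e1 + e2 := fun n => add_right_comm n e2 e1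
  constructor
  · intro h n
    obtain ⟨hab, hbc, hcd, hde, hef, hfa⟩ := hne n
    have hbg := (hne (n + e1)).2.2.1
    have hgf := (hne (n + e1)).2.2.2.1
    have hdg := (hne (n + e2)).2.2.2.2.1
    have hgb := (hne (n + e2)).2.2.2.2.2
    have hfg := (hne (n + e3)).1
    have hgd := (hne (n + e3)).2.1
    simp only [perm31, perm32, perm21] at hbg hgf hdg hgb hfg hgd
    have hD := h n
    rw [multiRatio, div_eq_iff (by exact mul_ne_zero (mul_ne_zero hbc hde) hfa)] at hD
    refine ⟨?_, ?_, ?_⟩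
    · rw [hα, hβ, hγ]
      field_simp
      linear_combination -hD
    · rw [hα, hβ, hγ]
      simp only [perm31, perm32, perm21]
      field_simp
    · rw [hα, hα, hβ, hβ]
      simp only [perm31, perm32, perm21]
      exact dskp_third_aux _ _ _ _ _ _ _ hbc hde hgd hgf hD
  · intro h n
    obtain ⟨hab, hbc, hcd, hde, hef, hfa⟩ := hne n
    have h1 := (h n).1
    rw [hα, hβ, hγ] at h1
    rw [multiRatio, div_eq_iff (by exact mul_ne_zero (mul_ne_zero hbc hde) hfa)]
    field_simp at h1
    linear_combination -h1
end

section
/- Let φ1, φ2, φ3, φ12, φ13, φ23 be nonzero complex numbers and set α = φ1/φ2, β = φ2/φ3, α₃ = φ13/φ23, β₁ = φ12/φ13. Then (α₃·β₁ − 1)(α − 1) = (α·β − 1)(α₃ − 1) holds if and only if (φ13 − φ12)/φ1 + (φ12 − φ23)/φ2 + (φ23 − φ13)/φ3 = 0. -/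
/-- Under the parametrization `α = φ1/φ2`, `β = φ2/φ3`, `α₃ = φ13/φ23`,
`β₁ = φ12/φ13`, the shape equation `(α₃β₁−1)(α−1) = (αβ−1)(α₃−1)` is equivalent
to the discrete dual KP wave function equation. -/
theorem shape_equation_iff_dual_wave_equation
    (φ1 φ2 φ3 φ12 φ13 φ23 : ℂ)
    (h1 : φ1 ≠ 0) (h2 : φ2 ≠ 0) (h3 : φ3 ≠ 0)
    (h12 : φ12 ≠ 0) (h13 : φ13 ≠ 0) (h23 : φ23 ≠ 0)
    (α β α3 β1 : ℂ)
    (hα : α = φ1 / φ2) (hβ : β = φ2 / φ3)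
    (hα3 : α3 = φ13 / φ23) (hβ1 : β1 = φ12 / φ13) :
    (α3 * β1 - 1) * (α - 1) = (α * β - 1) * (α3 - 1) ↔
      (φ13 - φ12) / φ1 + (φ12 - φ23) / φ2 + (φ23 - φ13) / φ3 = 0 := by
  subst hα hβ hα3 hβ1
  rw [div_add_div _ _ h1 h2, div_add_div _ _ (mul_ne_zero h1 h2) h3,
    div_eq_zero_iff]
  field_simp
  rw [or_iff_left (mul_ne_zero (mul_ne_zero h1 h2) h3)]
  constructor <;> intro h
  · refine mul_left_cancel₀ (mul_ne_zero h13 h23) ?_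
    linear_combination (φ13 * φ23) * h
  · linear_combination h
end

section
/- Let A, B, C be three affinely independent points of the complex plane ℂ (regarded as a real affine plane), let t, u, v be real numbers with t, u, v ∉ {0, 1}, and set F = (1−t)·A + t·B, D = (1−u)·B + u·C, E = (1−v)·C + v·A. Assume that the line through A and D and the line through B and E have a common point. Then there exists a point P lying simultaneously on the line through A and D, the line through B and E, and the line through C and F, if and only if t·u·v = (1−t)·(1−u)·(1−v). -/
lemma ceva_mem_line_iff (A D P : ℂ) :
    P ∈ affineSpan ℝ ({A, D} : Set ℂ) ↔ ∃ s : ℝ, P = s • (D - A) + A := by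
  have h := vadd_left_mem_affineSpan_pair (k := ℝ) (p₁ := A) (p₂ := D) (v := P - A)
  simp only [vsub_eq_sub, vadd_eq_add, sub_add_cancel] at h
  rw [h]
  constructor
  · rintro ⟨r, hr⟩; exact ⟨r, by rw [hr]; ring⟩
  · rintro ⟨s, hs⟩; exact ⟨s, by rw [hs]; ring⟩

lemma ceva_bary_zero {A B C : ℂ} (h : AffineIndependent ℝ ![A, B, C])
    {a b c : ℝ} (hsum : a + b + c = 0) (h0 : a • A + b • B + c • C = 0) :
    a = 0 ∧ b = 0 ∧ c = 0 := by
  rw [affineIndependent_iff] at h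
  have key := h Finset.univ ![a, b, c]
    (by simp [Fin.sum_univ_three, hsum])
    (by simpa [Fin.sum_univ_three] using h0)
  exact ⟨key 0 (by simp), key 1 (by simp), key 2 (by simp)⟩

/-- **Ceva's theorem** on the complex plane, regarded as a real affine plane. -/
theorem ceva_complex
    (A B C : ℂ) (hABC : AffineIndependent ℝ ![A, B, C])
    (t u v : ℝ) (ht0 : t ≠ 0) (ht1 : t ≠ 1) (hu0 : u ≠ 0) (hu1 : u ≠ 1)
    (hv0 : v ≠ 0) (hv1 : v ≠ 1)
    (F D E : ℂ)
    (hF : F = (1 - t) • A + t • B)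
    (hD : D = (1 - u) • B + u • C)
    (hE : E = (1 - v) • C + v • A)
    (hmeet : ∃ X : ℂ, X ∈ affineSpan ℝ ({A, D} : Set ℂ) ∧
      X ∈ affineSpan ℝ ({B, E} : Set ℂ)) :
    (∃ P : ℂ, P ∈ affineSpan ℝ ({A, D} : Set ℂ) ∧
      P ∈ affineSpan ℝ ({B, E} : Set ℂ) ∧
      P ∈ affineSpan ℝ ({C, F} : Set ℂ)) ↔
    t * u * v = (1 - t) * (1 - u) * (1 - v) := by
  subst hF hD hE
  constructor
  · rintro ⟨P, hAD, hBE, hCF⟩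
    rw [ceva_mem_line_iff] at hAD hBE hCF
    obtain ⟨s, hs⟩ := hAD
    obtain ⟨r, hr⟩ := hBE
    obtain ⟨q, hq⟩ := hCF
    -- barycentric coords of P: (1-s, s(1-u), s*u) = (r*v, 1-r, r*(1-v)) = (q*(1-t), q*t, 1-q)
    obtain ⟨e1, e2, e3⟩ := ceva_bary_zero hABC (a := (1-s) - r*v) (b := s*(1-u) - (1-r))
      (c := s*u - r*(1-v)) (by ring) (by
        have h0 := hs.symm.trans hr
        linear_combination (norm := module) h0)
    obtain ⟨f1, f2, f3⟩ := ceva_bary_zero hABC (a := (1-s) - q*(1-t)) (b := s*(1-u) - q*t)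
      (c := s*u - (1-q)) (by ring) (by
        have h0 := hs.symm.trans hq
        linear_combination (norm := module) h0)
    have hs0 : s ≠ 0 := by
      intro h; subst h
      have hr1 : r = 1 := by linarith
      apply hv1; nlinarith [e1]
    have hs1 : s ≠ 1 := by
      intro h; subst h
      have hr0 : r = 0 := by
        rcases mul_eq_zero.1 (show r * v = 0 by linarith) with h' | h'
        · exact h'
        · exact absurd h' hv0
      apply hu0; nlinarith [e2]
    have hT : t * (1 - s) = (1 - t) * (s * (1 - u)) := by
      linear_combination t * f1 - (1 - t) * f2
    have hV : v * (s * u) = (1 - v) * (1 - s) := by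
      linear_combination v * e3 - (1 - v) * e1
    have key : (t * u * v - (1 - t) * (1 - u) * (1 - v)) * (s * u * (1 - s)) = 0 := by
      linear_combination (v * s * u * u) * hT + ((1 - t) * s * (1 - u) * u) * hV
    have hne : s * u * (1 - s) ≠ 0 := by
      apply mul_ne_zero (mul_ne_zero hs0 hu0)
      exact sub_ne_zero.2 (Ne.symm hs1)
    have := (mul_eq_zero.1 key).resolve_right hne
    linarith [sub_eq_zero.1 this]
  · intro hceva
    obtain ⟨X, hAD, hBE⟩ := hmeet
    rw [ceva_mem_line_iff] at hAD hBE
    obtain ⟨s, hs⟩ := hAD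
    obtain ⟨r, hr⟩ := hBE
    obtain ⟨e1, e2, e3⟩ := ceva_bary_zero hABC (a := (1-s) - r*v) (b := s*(1-u) - (1-r))
      (c := s*u - r*(1-v)) (by ring) (by
        have h0 := hs.symm.trans hr
        linear_combination (norm := module) h0)
    -- eliminate r:  s * M = 1 - v  with  M = 1 - v + u*v
    have hEv : s * (1 - v + u * v) = 1 - v := by
      linear_combination -e1 - v * e2
    have hM : (1 - v + u * v) ≠ 0 := by
      intro h; rw [h, mul_zero] at hEv; exact hv1 (by linarith)
    have hK : (1 - u - v + 2 * (u * v)) ≠ 0 := by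
      intro h
      have h2 : (1 - u) * (1 - v) = 0 := by linear_combination t * h - hceva
      rcases mul_eq_zero.1 h2 with h' | h'
      · exact hu1 (by linarith)
      · exact hv1 (by linarith)
    have htK : t * (1 - u - v + 2 * (u * v)) = (1 - u) * (1 - v) := by
      linear_combination hceva
    have hseq : s = (1 - v) / (1 - v + u * v) := by
      rw [eq_div_iff hM]; linarith [hEv]
    have hteq : t = (1 - u) * (1 - v) / (1 - u - v + 2 * (u * v)) := by
      rw [eq_div_iff hK]; linarith [htK]
    have h1 : (1 - s * u) * t = s * (1 - u) := by
      rw [hseq, hteq]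
      have hM' : 1 - v + v * u ≠ 0 := by rw [mul_comm]; exact hM
      have hK' : 1 - v + v * u * 2 - u ≠ 0 := by
        intro h; apply hK; linear_combination h
      field_simp
      rw [div_eq_one_iff_eq (by intro h; apply hK; linear_combination h)]
      ring
    have h2 : (1 - s * u) * (1 - t) = 1 - s := by
      linear_combination -h1
    refine ⟨X, ?_, ?_, ?_⟩
    · rw [ceva_mem_line_iff]; exact ⟨s, hs⟩
    · rw [ceva_mem_line_iff]; exact ⟨r, hr⟩
    · rw [ceva_mem_line_iff]
      refine ⟨1 - s * u, ?_⟩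
      rw [hs]
      match_scalars
      · linear_combination h2
      · ring
      · linear_combination -h2
end

section
/- Let d ≥ 1 and let φ1, φ2, φ3, φ12, φ13, φ23 be nonzero real numbers satisfying (φ13 − φ12)/φ1 + (φ12 − φ23)/φ2 + (φ23 − φ13)/φ3 = 0 and such that φ1 ≠ φ2, φ2 ≠ φ3, φ1 ≠ φ3, φ13 ≠ φ23, φ12 ≠ φ13, φ12 ≠ φ23. Let Φ1, Φ2, Φ3 ∈ ℝ^d and define Φ12 = (φ2·Φ1 − φ1·Φ2)/(φ2 − φ1), Φ23 = (φ3·Φ2 − φ2·Φ3)/(φ3 − φ2), Φ13 = (φ3·Φ1 − φ1·Φ3)/(φ3 − φ1). Then the three candidate values for Φ123 coincide: (φ23·Φ13 − φ13·Φ23)/(φ23 − φ13) = (φ13·Φ12 − φ12·Φ13)/(φ13 − φ12) = (φ23·Φ12 − φ12·Φ23)/(φ23 − φ12). In other words, the linear triad defining Menelaus-Darboux lattices is compatible whenever φ satisfies the discrete dual KP wave function equation. -/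
/-- Scalar compatibility lemma for the Menelaus-Darboux triad. -/
lemma menelaus_darboux_scalar
    (φ1 φ2 φ3 φ12 φ13 φ23 a b c : ℝ)
    (hC : (φ13 - φ12)*φ2*φ3 + (φ12 - φ23)*φ1*φ3 + (φ23 - φ13)*φ1*φ2 = 0)
    (h21 : φ2 - φ1 ≠ 0) (h32 : φ3 - φ2 ≠ 0) (h31 : φ3 - φ1 ≠ 0)
    (h2313 : φ23 - φ13 ≠ 0) (h1312 : φ13 - φ12 ≠ 0) (h2312 : φ23 - φ12 ≠ 0) :
    (φ23 - φ13)⁻¹ * (φ23 * ((φ3 - φ1)⁻¹ * (φ3 * a - φ1 * c))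
        - φ13 * ((φ3 - φ2)⁻¹ * (φ3 * b - φ2 * c))) =
      (φ13 - φ12)⁻¹ * (φ13 * ((φ2 - φ1)⁻¹ * (φ2 * a - φ1 * b))
        - φ12 * ((φ3 - φ1)⁻¹ * (φ3 * a - φ1 * c))) ∧
    (φ13 - φ12)⁻¹ * (φ13 * ((φ2 - φ1)⁻¹ * (φ2 * a - φ1 * b))
        - φ12 * ((φ3 - φ1)⁻¹ * (φ3 * a - φ1 * c))) =
      (φ23 - φ12)⁻¹ * (φ23 * ((φ2 - φ1)⁻¹ * (φ2 * a - φ1 * b))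
        - φ12 * ((φ3 - φ2)⁻¹ * (φ3 * b - φ2 * c))) := by
  have e1 : (φ23 - φ13)⁻¹ * (φ23 * ((φ3 - φ1)⁻¹ * (φ3 * a - φ1 * c))
        - φ13 * ((φ3 - φ2)⁻¹ * (φ3 * b - φ2 * c))) =
      (φ23 * (φ3 * a - φ1 * c) * (φ3 - φ2) - φ13 * (φ3 * b - φ2 * c) * (φ3 - φ1)) /
        ((φ23 - φ13) * (φ3 - φ1) * (φ3 - φ2)) := by
    field_simp
  have e2 : (φ13 - φ12)⁻¹ * (φ13 * ((φ2 - φ1)⁻¹ * (φ2 * a - φ1 * b))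
        - φ12 * ((φ3 - φ1)⁻¹ * (φ3 * a - φ1 * c))) =
      (φ13 * (φ2 * a - φ1 * b) * (φ3 - φ1) - φ12 * (φ3 * a - φ1 * c) * (φ2 - φ1)) /
        ((φ13 - φ12) * (φ2 - φ1) * (φ3 - φ1)) := by
    field_simp
  have e3 : (φ23 - φ12)⁻¹ * (φ23 * ((φ2 - φ1)⁻¹ * (φ2 * a - φ1 * b))
        - φ12 * ((φ3 - φ2)⁻¹ * (φ3 * b - φ2 * c))) =
      (φ23 * (φ2 * a - φ1 * b) * (φ3 - φ2) - φ12 * (φ3 * b - φ2 * c) * (φ2 - φ1)) /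
        ((φ23 - φ12) * (φ2 - φ1) * (φ3 - φ2)) := by
    field_simp
  constructor
  · rw [e1, e2, div_eq_div_iff (mul_ne_zero (mul_ne_zero h2313 h31) h32)
      (mul_ne_zero (mul_ne_zero h1312 h21) h31)]
    linear_combination (φ13 * (a * (φ3 - φ1) * (φ3 - φ2) - b * (φ3 - φ1)^2
        + c * (φ1 - φ2) * (φ1 - φ3))) * hC
  · rw [e2, e3, div_eq_div_iff (mul_ne_zero (mul_ne_zero h1312 h21) h31)
      (mul_ne_zero (mul_ne_zero h2312 h21) h32)]
    linear_combination (φ12 * (a * (φ2 - φ1) * (φ2 - φ3) + b * (φ1 - φ2) * (φ1 - φ3)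
      - c * (φ2 - φ1)^2)) * hC

/-- Compatibility of the Menelaus-Darboux linear triad: if `φ` satisfies the
(single-point) discrete dual KP wave function equation, the three candidate
values for `Φ123` coincide. -/
theorem menelaus_darboux_triad_compatible
    (d : ℕ) (hd : 1 ≤ d)
    (φ1 φ2 φ3 φ12 φ13 φ23 : ℝ)
    (h1 : φ1 ≠ 0) (h2 : φ2 ≠ 0) (h3 : φ3 ≠ 0)
    (h12 : φ12 ≠ 0) (h13 : φ13 ≠ 0) (h23 : φ23 ≠ 0)
    (hwave : (φ13 - φ12) / φ1 + (φ12 - φ23) / φ2 + (φ23 - φ13) / φ3 = 0)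
    (hne12 : φ1 ≠ φ2) (hne23 : φ2 ≠ φ3) (hne13 : φ1 ≠ φ3)
    (hne1323 : φ13 ≠ φ23) (hne1213 : φ12 ≠ φ13) (hne1223 : φ12 ≠ φ23)
    (Φ1 Φ2 Φ3 : Fin d → ℝ)
    (Φ12 Φ23 Φ13 : Fin d → ℝ)
    (hΦ12 : Φ12 = (φ2 - φ1)⁻¹ • (φ2 • Φ1 - φ1 • Φ2))
    (hΦ23 : Φ23 = (φ3 - φ2)⁻¹ • (φ3 • Φ2 - φ2 • Φ3))
    (hΦ13 : Φ13 = (φ3 - φ1)⁻¹ • (φ3 • Φ1 - φ1 • Φ3)) :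
    (φ23 - φ13)⁻¹ • (φ23 • Φ13 - φ13 • Φ23) =
      (φ13 - φ12)⁻¹ • (φ13 • Φ12 - φ12 • Φ13) ∧
    (φ13 - φ12)⁻¹ • (φ13 • Φ12 - φ12 • Φ13) =
      (φ23 - φ12)⁻¹ • (φ23 • Φ12 - φ12 • Φ23) := by
  have hC : (φ13 - φ12)*φ2*φ3 + (φ12 - φ23)*φ1*φ3 + (φ23 - φ13)*φ1*φ2 = 0 := by
    field_simp at hwave
    linarith [hwave]
  have h21 : φ2 - φ1 ≠ 0 := sub_ne_zero.mpr (Ne.symm hne12)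
  have h32 : φ3 - φ2 ≠ 0 := sub_ne_zero.mpr (Ne.symm hne23)
  have h31 : φ3 - φ1 ≠ 0 := sub_ne_zero.mpr (Ne.symm hne13)
  have h2313 : φ23 - φ13 ≠ 0 := sub_ne_zero.mpr (Ne.symm hne1323)
  have h1312 : φ13 - φ12 ≠ 0 := sub_ne_zero.mpr (Ne.symm hne1213)
  have h2312 : φ23 - φ12 ≠ 0 := sub_ne_zero.mpr (Ne.symm hne1223)
  subst hΦ12 hΦ23 hΦ13
  constructor <;> funext i <;>
    simp only [Pi.smul_apply, Pi.sub_apply, smul_eq_mul]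
  · exact (menelaus_darboux_scalar φ1 φ2 φ3 φ12 φ13 φ23 (Φ1 i) (Φ2 i) (Φ3 i)
      hC h21 h32 h31 h2313 h1312 h2312).1
  · exact (menelaus_darboux_scalar φ1 φ2 φ3 φ12 φ13 φ23 (Φ1 i) (Φ2 i) (Φ3 i)
      hC h21 h32 h31 h2313 h1312 h2312).2
end

section
/- Let θ¹, θ², φ: ℝ → ℂ be twice differentiable, with θ¹ and θ² nowhere zero and the Wronskian W(θ¹,θ²) = θ¹·(θ²)′ − θ²·(θ¹)′ nowhere zero. Define the Darboux transforms φ₁ = φ′ − ((θ¹)′/θ¹)·φ and φ₂ = φ′ − ((θ²)′/θ²)·φ, the transformed eigenfunctions θ²₁ = (θ²)′ − ((θ¹)′/θ¹)·θ² and θ¹₂ = (θ¹)′ − ((θ²)′/θ²)·θ¹, and the second-generation transforms φ₁₂ = (φ₁)′ − ((θ²₁)′/θ²₁)·φ₁ and φ₂₁ = (φ₂)′ − ((θ¹₂)′/θ¹₂)·φ₂. Then at every point φ₁₂ = φ₂₁, and both are equal to the ratio of Wronskians W(θ¹,θ²,φ)/W(θ¹,θ²), where W(θ¹,θ²,φ)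 is the 3×3 Wronskian determinant of θ¹, θ², φ (rows built from the functions and their first and second derivatives). -/
open Matrix

lemma deriv_darboux (g f : ℝ → ℂ)
    (hg : Differentiable ℝ g) (hg' : Differentiable ℝ (deriv g))
    (hf : Differentiable ℝ f) (hf' : Differentiable ℝ (deriv f))
    (x : ℝ) (hgx : g x ≠ 0) :
    deriv (fun y => deriv f y - deriv g y / g y * f y) x
      = deriv (deriv f) x
        - (deriv (deriv g) x * g x - deriv g x * deriv g x) / (g x * g x) * f x
        - deriv g x / g x * deriv f x := by
  have h1 : DifferentiableAt ℝ (fun y => deriv g y / g y) x := (hg' x).div (hg x) hgx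
  rw [deriv_fun_sub (hf' x) (h1.fun_mul (hf x)), deriv_fun_mul h1 (hf x),
    deriv_fun_div (hg' x) (hg x) hgx]
  ring

lemma darboux_core (a a' a'' b b' b'' p p' p'' : ℂ) (ha : a ≠ 0)
    (hw : a*b' - b*a' ≠ 0) :
    (p'' - (a''*a - a'*a')/(a*a)*p - a'/a*p')
      - (b'' - (a''*a - a'*a')/(a*a)*b - a'/a*b') / ((a*b' - b*a')/a) * (p' - a'/a*p)
    = (a*(b'*p'' - b''*p') - a'*(b*p'' - b''*p) + a''*(b*p' - b'*p))/(a*b'-b*a') := by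
  have cancel : ∀ Y Z : ℂ, Y * a / (a*b'-b*a') * Z * (a*b'-b*a') = Y * a * Z := by
    intro Y Z
    field_simp
  rw [div_div_eq_mul_div, eq_div_iff hw, sub_mul, cancel]
  field_simp [ha]
  ring

set_option maxHeartbeats 1000000 in
/-- **Permutability of the classical Darboux transformation**: the
second-generation Darboux transforms `φ₁₂` and `φ₂₁` coincide and equal the
ratio of Wronskians `W(θ¹,θ²,φ)/W(θ¹,θ²)`. -/
theorem darboux_permutability
    (θ1 θ2 φ : ℝ → ℂ)
    (hθ1 : Differentiable ℝ θ1) (hθ1' : Differentiable ℝ (deriv θ1))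
    (hθ2 : Differentiable ℝ θ2) (hθ2' : Differentiable ℝ (deriv θ2))
    (hφ : Differentiable ℝ φ) (hφ' : Differentiable ℝ (deriv φ))
    (hθ1ne : ∀ x, θ1 x ≠ 0) (hθ2ne : ∀ x, θ2 x ≠ 0)
    (hW : ∀ x, θ1 x * deriv θ2 x - θ2 x * deriv θ1 x ≠ 0)
    (φ1 φ2 θ21 θ12 φ12 φ21 : ℝ → ℂ)
    (hφ1 : φ1 = fun x => deriv φ x - deriv θ1 x / θ1 x * φ x)
    (hφ2 : φ2 = fun x => deriv φ x - deriv θ2 x / θ2 x * φ x)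
    (hθ21 : θ21 = fun x => deriv θ2 x - deriv θ1 x / θ1 x * θ2 x)
    (hθ12 : θ12 = fun x => deriv θ1 x - deriv θ2 x / θ2 x * θ1 x)
    (hφ12 : φ12 = fun x => deriv φ1 x - deriv θ21 x / θ21 x * φ1 x)
    (hφ21 : φ21 = fun x => deriv φ2 x - deriv θ12 x / θ12 x * φ2 x) :
    ∀ x : ℝ, φ12 x = φ21 x ∧
      φ12 x =
        (!![θ1 x, deriv θ1 x, deriv (deriv θ1) x;
            θ2 x, deriv θ2 x, deriv (deriv θ2) x;
            φ x, deriv φ x, deriv (deriv φ) x] : Matrix (Fin 3) (Fin 3) ℂ).det /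
          (θ1 x * deriv θ2 x - θ2 x * deriv θ1 x) := by
  intro x
  have h1 := hθ1ne x
  have h2 := hθ2ne x
  have hw := hW x
  have hw2 : θ2 x * deriv θ1 x - θ1 x * deriv θ2 x ≠ 0 := by
    intro h0; apply hw; linear_combination -h0
  have hθ21x : θ21 x = (θ1 x * deriv θ2 x - θ2 x * deriv θ1 x) / θ1 x := by
    rw [hθ21]; field_simp
  have hθ12x : θ12 x = (θ2 x * deriv θ1 x - θ1 x * deriv θ2 x) / θ2 x := by
    rw [hθ12]; field_simp
  have dφ1 := hφ1 ▸ deriv_darboux θ1 φ hθ1 hθ1' hφ hφ' x h1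
  have dφ2 := hφ2 ▸ deriv_darboux θ2 φ hθ2 hθ2' hφ hφ' x h2
  have dθ21 := hθ21 ▸ deriv_darboux θ1 θ2 hθ1 hθ1' hθ2 hθ2' x h1
  have dθ12 := hθ12 ▸ deriv_darboux θ2 θ1 hθ2 hθ2' hθ1 hθ1' x h2
  have hφ1x : φ1 x = deriv φ x - deriv θ1 x / θ1 x * φ x := by rw [hφ1]
  have hφ2x : φ2 x = deriv φ x - deriv θ2 x / θ2 x * φ x := by rw [hφ2]
  have key : φ12 x =
      (!![θ1 x, deriv θ1 x, deriv (deriv θ1) x;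
          θ2 x, deriv θ2 x, deriv (deriv θ2) x;
          φ x, deriv φ x, deriv (deriv φ) x] : Matrix (Fin 3) (Fin 3) ℂ).det /
        (θ1 x * deriv θ2 x - θ2 x * deriv θ1 x) := by
    simp only [hφ12]
    rw [dφ1, dθ21, hφ1x, hθ21x,
      darboux_core (θ1 x) (deriv θ1 x) (deriv (deriv θ1) x) (θ2 x) (deriv θ2 x)
        (deriv (deriv θ2) x) (φ x) (deriv φ x) (deriv (deriv φ) x) h1 hw]
    simp only [Matrix.det_fin_three, Matrix.cons_val', Matrix.cons_val_zero,
      Matrix.cons_val_one, Matrix.head_cons, Matrix.empty_val',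
      Matrix.cons_val_fin_one, Matrix.head_fin_const, Matrix.cons_val_two,
      Matrix.tail_cons, Matrix.of_apply]
    rw [div_eq_div_iff hw hw]
    ring
  have key2 : φ21 x =
      (!![θ1 x, deriv θ1 x, deriv (deriv θ1) x;
          θ2 x, deriv θ2 x, deriv (deriv θ2) x;
          φ x, deriv φ x, deriv (deriv φ) x] : Matrix (Fin 3) (Fin 3) ℂ).det /
        (θ1 x * deriv θ2 x - θ2 x * deriv θ1 x) := by
    simp only [hφ21]
    rw [dφ2, dθ12, hφ2x, hθ12x,
      darboux_core (θ2 x) (deriv θ2 x) (deriv (deriv θ2) x) (θ1 x) (deriv θ1 x)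
        (deriv (deriv θ1) x) (φ x) (deriv φ x) (deriv (deriv φ) x) h2 hw2]
    simp only [Matrix.det_fin_three, Matrix.cons_val', Matrix.cons_val_zero,
      Matrix.cons_val_one, Matrix.head_cons, Matrix.empty_val',
      Matrix.cons_val_fin_one, Matrix.head_fin_const, Matrix.cons_val_two,
      Matrix.tail_cons, Matrix.of_apply]
    rw [div_eq_div_iff hw2 hw]
    ring
  exact ⟨key.trans key2.symm, key⟩
end

section
/- Let θ¹, θ², θ³, φ: ℝ → ℂ be twice differentiable, with θ¹, θ², θ³ nowhere zero and each pairwise Wronskian W(θ^i,θ^k) = θ^i·(θ^k)′ − θ^k·(θ^i)′ (i ≠ k) nowhere zero. Define φ_i = φ′ − ((θ^i)′/θ^i)·φ for i = 1,2,3 and φ_ik = W(θ^i,θ^k,φ)/W(θ^i,θ^k), where W(θ^i,θ^k,φ) is the 3×3 Wronskian determinant. Then at every point where φ₁, φ₂, φ₃ are all nonzero, (φ₁₃ − φ₁₂)/φ₁ + (φ₁₂ − φ₂₃)/φ₂ + (φ₂₃ − φ₁₃)/φ₃ = 0. -/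
open Matrix

/-- **Superposition principle for the classical Darboux transformation**: the
first- and second-generation Darboux transforms of `φ` satisfy the discrete dual
KP wave function equation. -/
theorem darboux_superposition_dual_wave
    (θ1 θ2 θ3 φ : ℝ → ℂ)
    (hθ1 : Differentiable ℝ θ1) (hθ1' : Differentiable ℝ (deriv θ1))
    (hθ2 : Differentiable ℝ θ2) (hθ2' : Differentiable ℝ (deriv θ2))
    (hθ3 : Differentiable ℝ θ3) (hθ3' : Differentiable ℝ (deriv θ3))
    (hφ : Differentiable ℝ φ) (hφ' : Differentiable ℝ (deriv φ))
    (hθ1ne : ∀ x, θ1 x ≠ 0) (hθ2ne : ∀ x, θ2 x ≠ 0) (hθ3ne : ∀ x, θ3 x ≠ 0)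
    (hW12 : ∀ x, θ1 x * deriv θ2 x - θ2 x * deriv θ1 x ≠ 0)
    (hW13 : ∀ x, θ1 x * deriv θ3 x - θ3 x * deriv θ1 x ≠ 0)
    (hW23 : ∀ x, θ2 x * deriv θ3 x - θ3 x * deriv θ2 x ≠ 0)
    (φ1 φ2 φ3 φ12 φ13 φ23 : ℝ → ℂ)
    (hφ1 : φ1 = fun x => deriv φ x - deriv θ1 x / θ1 x * φ x)
    (hφ2 : φ2 = fun x => deriv φ x - deriv θ2 x / θ2 x * φ x)
    (hφ3 : φ3 = fun x => deriv φ x - deriv θ3 x / θ3 x * φ x)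
    (hφ12 : φ12 = fun x =>
      (!![θ1 x, deriv θ1 x, deriv (deriv θ1) x;
          θ2 x, deriv θ2 x, deriv (deriv θ2) x;
          φ x, deriv φ x, deriv (deriv φ) x] : Matrix (Fin 3) (Fin 3) ℂ).det /
        (θ1 x * deriv θ2 x - θ2 x * deriv θ1 x))
    (hφ13 : φ13 = fun x =>
      (!![θ1 x, deriv θ1 x, deriv (deriv θ1) x;
          θ3 x, deriv θ3 x, deriv (deriv θ3) x;
          φ x, deriv φ x, deriv (deriv φ) x] : Matrix (Fin 3) (Fin 3) ℂ).det /
        (θ1 x * deriv θ3 x - θ3 x * deriv θ1 x))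
    (hφ23 : φ23 = fun x =>
      (!![θ2 x, deriv θ2 x, deriv (deriv θ2) x;
          θ3 x, deriv θ3 x, deriv (deriv θ3) x;
          φ x, deriv φ x, deriv (deriv φ) x] : Matrix (Fin 3) (Fin 3) ℂ).det /
        (θ2 x * deriv θ3 x - θ3 x * deriv θ2 x)) :
    ∀ x : ℝ, φ1 x ≠ 0 → φ2 x ≠ 0 → φ3 x ≠ 0 →
      (φ13 x - φ12 x) / φ1 x + (φ12 x - φ23 x) / φ2 x +
        (φ23 x - φ13 x) / φ3 x = 0 := by
  intro x h1 h2 h3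
  subst hφ1 hφ2 hφ3 hφ12 hφ13 hφ23
  simp only [Matrix.det_fin_three, Matrix.cons_val', Matrix.cons_val_zero,
    Matrix.cons_val_one, Matrix.head_cons, Matrix.empty_val',
    Matrix.cons_val_fin_one, Matrix.head_fin_const, Matrix.cons_val_two,
    Matrix.tail_cons, Matrix.head_fin_const, Matrix.of_apply] at *
  have e1 : deriv φ x - deriv θ1 x / θ1 x * φ x
      = (θ1 x * deriv φ x - deriv θ1 x * φ x) / θ1 x := by
    field_simp [hθ1ne x]
  have e2 : deriv φ x - deriv θ2 x / θ2 x * φ x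
      = (θ2 x * deriv φ x - deriv θ2 x * φ x) / θ2 x := by
    field_simp [hθ2ne x]
  have e3 : deriv φ x - deriv θ3 x / θ3 x * φ x
      = (θ3 x * deriv φ x - deriv θ3 x * φ x) / θ3 x := by
    field_simp [hθ3ne x]
  rw [e1] at h1 ⊢
  rw [e2] at h2 ⊢
  rw [e3] at h3 ⊢
  have h1' : θ1 x * deriv φ x - deriv θ1 x * φ x ≠ 0 := by
    intro h; rw [h] at h1; simp at h1
  have h2' : θ2 x * deriv φ x - deriv θ2 x * φ x ≠ 0 := by
    intro h; rw [h] at h2; simp at h2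
  have h3' : θ3 x * deriv φ x - deriv θ3 x * φ x ≠ 0 := by
    intro h; rw [h] at h3; simp at h3
  rw [div_sub_div _ _ (hW13 x) (hW12 x), div_sub_div _ _ (hW12 x) (hW23 x),
    div_sub_div _ _ (hW23 x) (hW13 x), div_div_div_eq, div_div_div_eq, div_div_div_eq,
    div_add_div _ _ (mul_ne_zero (mul_ne_zero (hW13 x) (hW12 x)) h1')
      (mul_ne_zero (mul_ne_zero (hW12 x) (hW23 x)) h2'),
    div_add_div _ _ (mul_ne_zero (mul_ne_zero (mul_ne_zero (hW13 x) (hW12 x)) h1')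
      (mul_ne_zero (mul_ne_zero (hW12 x) (hW23 x)) h2'))
      (mul_ne_zero (mul_ne_zero (hW23 x) (hW13 x)) h3'), div_eq_zero_iff]
  left
  ring
end

section
/- Let φ, φ′, θ¹, θ², θ³, θ¹′, θ²′, θ³′, M, M¹, M², M³ be complex numbers with θ¹, θ², θ³ ≠ 0 and θ^i·θ^k′ − θ^k·θ^i′ ≠ 0 for all i ≠ k. Define φ_i = φ′ − (θ^i′/θ^i)·φ, M_i = M − M^i·(φ/θ^i) for i = 1,2,3, and M_ik = M + (M^i·θ^k·φ_k − M^k·θ^i·φ_i)/(θ^i·θ^k′ − θ^k·θ^i′) for i ≠ k. Assume the six differences M₁−M₁₂, M₁₂−M₂, M₂−M₂₃, M₂₃−M₃, M₃−M₁₃, M₁₃−M₁ are nonzero. Then M(M₁, M₁₂, M₂, M₂₃, M₃, M₁₃) = −1. -/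
/-- The superposition formula for the bilinear potentials associated with the
classical Darboux transformation: the multi-ratio of the first- and
second-generation bilinear potentials equals `-1` (the dSKP equation). -/
theorem bilinear_potentials_multiRatio
    (φ φ' θ1 θ2 θ3 θ1' θ2' θ3' M M1' M2' M3' : ℂ)
    (hθ1 : θ1 ≠ 0) (hθ2 : θ2 ≠ 0) (hθ3 : θ3 ≠ 0)
    (hW12 : θ1 * θ2' - θ2 * θ1' ≠ 0)
    (hW13 : θ1 * θ3' - θ3 * θ1' ≠ 0)
    (hW23 : θ2 * θ3' - θ3 * θ2' ≠ 0)
    (φ1 φ2 φ3 M1 M2 M3 M12 M23 M13 : ℂ)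
    (hφ1 : φ1 = φ' - θ1' / θ1 * φ)
    (hφ2 : φ2 = φ' - θ2' / θ2 * φ)
    (hφ3 : φ3 = φ' - θ3' / θ3 * φ)
    (hM1 : M1 = M - M1' * (φ / θ1))
    (hM2 : M2 = M - M2' * (φ / θ2))
    (hM3 : M3 = M - M3' * (φ / θ3))
    (hM12 : M12 = M + (M1' * θ2 * φ2 - M2' * θ1 * φ1) / (θ1 * θ2' - θ2 * θ1'))
    (hM23 : M23 = M + (M2' * θ3 * φ3 - M3' * θ2 * φ2) / (θ2 * θ3' - θ3 * θ2'))
    (hM13 : M13 = M + (M1' * θ3 * φ3 - M3' * θ1 * φ1) / (θ1 * θ3' - θ3 * θ1'))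
    (h1 : M1 - M12 ≠ 0) (h2 : M12 - M2 ≠ 0) (h3 : M2 - M23 ≠ 0)
    (h4 : M23 - M3 ≠ 0) (h5 : M3 - M13 ≠ 0) (h6 : M13 - M1 ≠ 0) :
    multiRatio M1 M12 M2 M23 M3 M13 = -1 := by
  have hden : (M12 - M2) * (M23 - M3) * (M13 - M1) ≠ 0 := by
    exact mul_ne_zero (mul_ne_zero h2 h4) h6
  rw [multiRatio, div_eq_iff hden]
  subst hφ1 hφ2 hφ3 hM1 hM2 hM3 hM12 hM23 hM13
  have e13 : θ1 * θ3' - θ1' * θ3 ≠ 0 := by intro h; apply hW13; linear_combination h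
  have e23 : θ2 * θ3' - θ2' * θ3 ≠ 0 := by intro h; apply hW23; linear_combination h
  have e12 : θ1 * θ2' - θ1' * θ2 ≠ 0 := by intro h; apply hW12; linear_combination h
  field_simp
  ring
end

section
/- Let μ: ℂ → ℂ be real-differentiable, and let Z, W: ℂ → ℂ be twice continuously real-differentiable with W_z(p) ≠ 0 for all p, where the Wirtinger derivatives are f_z(p) = (1/2)(Df(p)(1) − i·Df(p)(i)) and f_z̄(p) = (1/2)(Df(p)(1) + i·Df(p)(i)). Suppose Z_z̄ = μ·Z_z and W_z̄ = μ·W_z everywhere. Then the Darboux transform Z₁ = Z − (W/W_z)·Z_z is real-differentiable and satisfies the same Beltrami equation: (Z₁)_z̄ = μ·(Z₁)_z everywhere. -/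
/-- The Wirtinger derivative `f_z` of a map `f : ℂ → ℂ`, computed from the real
Fréchet derivative. -/
noncomputable def wirtingerZ (f : ℂ → ℂ) (p : ℂ) : ℂ :=
  (1 / 2) * (fderiv ℝ f p 1 - Complex.I * fderiv ℝ f p Complex.I)

/-- The Wirtinger derivative `f_z̄` of a map `f : ℂ → ℂ`, computed from the real
Fréchet derivative. -/
noncomputable def wirtingerZBar (f : ℂ → ℂ) (p : ℂ) : ℂ :=
  (1 / 2) * (fderiv ℝ f p 1 + Complex.I * fderiv ℝ f p Complex.I)

section Helpers

variable {f g : ℂ → ℂ} {p : ℂ}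

lemma wirtingerZ_const (c : ℂ) (p : ℂ) : wirtingerZ (fun _ => c) p = 0 := by
  simp [wirtingerZ]

lemma wirtingerZBar_const (c : ℂ) (p : ℂ) : wirtingerZBar (fun _ => c) p = 0 := by
  simp [wirtingerZBar]

lemma wirtingerZ_sub (hf : DifferentiableAt ℝ f p) (hg : DifferentiableAt ℝ g p) :
    wirtingerZ (fun q => f q - g q) p = wirtingerZ f p - wirtingerZ g p := by
  simp only [wirtingerZ, fderiv_fun_sub hf hg, ContinuousLinearMap.sub_apply]
  ring

lemma wirtingerZBar_sub (hf : DifferentiableAt ℝ f p) (hg : DifferentiableAt ℝ g p) :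
    wirtingerZBar (fun q => f q - g q) p = wirtingerZBar f p - wirtingerZBar g p := by
  simp only [wirtingerZBar, fderiv_fun_sub hf hg, ContinuousLinearMap.sub_apply]
  ring

lemma wirtingerZ_mul (hf : DifferentiableAt ℝ f p) (hg : DifferentiableAt ℝ g p) :
    wirtingerZ (fun q => f q * g q) p = wirtingerZ f p * g p + f p * wirtingerZ g p := by
  simp only [wirtingerZ, fderiv_fun_mul hf hg, ContinuousLinearMap.add_apply,
    ContinuousLinearMap.smul_apply, smul_eq_mul]
  ring

lemma wirtingerZBar_mul (hf : DifferentiableAt ℝ f p) (hg : DifferentiableAt ℝ g p) :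
    wirtingerZBar (fun q => f q * g q) p = wirtingerZBar f p * g p + f p * wirtingerZBar g p := by
  simp only [wirtingerZBar, fderiv_fun_mul hf hg, ContinuousLinearMap.add_apply,
    ContinuousLinearMap.smul_apply, smul_eq_mul]
  ring

lemma wirtingerZ_inv (hf : Differentiable ℝ f) (h0 : ∀ q, f q ≠ 0) :
    wirtingerZ (fun q => (f q)⁻¹) p = - wirtingerZ f p / (f p) ^ 2 := by
  have hinv : DifferentiableAt ℝ (fun q => (f q)⁻¹) p := (hf p).inv (h0 p)
  have h1 : (fun q => f q * (f q)⁻¹) = fun _ => (1 : ℂ) :=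
    funext fun q => mul_inv_cancel₀ (h0 q)
  have h2 := wirtingerZ_mul (hf p) hinv
  rw [h1, wirtingerZ_const] at h2
  have hp := h0 p
  field_simp [hp] at h2 ⊢
  linear_combination -h2

lemma wirtingerZBar_inv (hf : Differentiable ℝ f) (h0 : ∀ q, f q ≠ 0) :
    wirtingerZBar (fun q => (f q)⁻¹) p = - wirtingerZBar f p / (f p) ^ 2 := by
  have hinv : DifferentiableAt ℝ (fun q => (f q)⁻¹) p := (hf p).inv (h0 p)
  have h1 : (fun q => f q * (f q)⁻¹) = fun _ => (1 : ℂ) :=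
    funext fun q => mul_inv_cancel₀ (h0 q)
  have h2 := wirtingerZBar_mul (hf p) hinv
  rw [h1, wirtingerZBar_const] at h2
  have hp := h0 p
  field_simp [hp] at h2 ⊢
  linear_combination -h2

lemma hasFDerivAt_wirtingerZ (hf : ContDiff ℝ 2 f) (p : ℂ) :
    HasFDerivAt (wirtingerZ f)
      ((1/2 : ℂ) • ((ContinuousLinearMap.apply ℝ ℂ (1:ℂ)).comp (fderiv ℝ (fderiv ℝ f) p)
        - Complex.I • (ContinuousLinearMap.apply ℝ ℂ (Complex.I)).comp
            (fderiv ℝ (fderiv ℝ f) p))) p := by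
  have hF : Differentiable ℝ (fderiv ℝ f) :=
    (hf.fderiv_right (m := 1) (by norm_num)).differentiable (by norm_num)
  have hS : HasFDerivAt (fderiv ℝ f) (fderiv ℝ (fderiv ℝ f) p) p := (hF p).hasFDerivAt
  have H1 : HasFDerivAt (fun q => fderiv ℝ f q (1:ℂ))
      ((ContinuousLinearMap.apply ℝ ℂ (1:ℂ)).comp (fderiv ℝ (fderiv ℝ f) p)) p :=
    (ContinuousLinearMap.apply ℝ ℂ (1:ℂ)).hasFDerivAt.comp p hS
  have HI : HasFDerivAt (fun q => fderiv ℝ f q Complex.I)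
      ((ContinuousLinearMap.apply ℝ ℂ Complex.I).comp (fderiv ℝ (fderiv ℝ f) p)) p :=
    (ContinuousLinearMap.apply ℝ ℂ Complex.I).hasFDerivAt.comp p hS
  exact (H1.sub (HI.const_mul Complex.I)).const_mul ((1:ℂ)/2)

lemma hasFDerivAt_wirtingerZBar (hf : ContDiff ℝ 2 f) (p : ℂ) :
    HasFDerivAt (wirtingerZBar f)
      ((1/2 : ℂ) • ((ContinuousLinearMap.apply ℝ ℂ (1:ℂ)).comp (fderiv ℝ (fderiv ℝ f) p)
        + Complex.I • (ContinuousLinearMap.apply ℝ ℂ (Complex.I)).comp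
            (fderiv ℝ (fderiv ℝ f) p))) p := by
  have hF : Differentiable ℝ (fderiv ℝ f) :=
    (hf.fderiv_right (m := 1) (by norm_num)).differentiable (by norm_num)
  have hS : HasFDerivAt (fderiv ℝ f) (fderiv ℝ (fderiv ℝ f) p) p := (hF p).hasFDerivAt
  have H1 : HasFDerivAt (fun q => fderiv ℝ f q (1:ℂ))
      ((ContinuousLinearMap.apply ℝ ℂ (1:ℂ)).comp (fderiv ℝ (fderiv ℝ f) p)) p :=
    (ContinuousLinearMap.apply ℝ ℂ (1:ℂ)).hasFDerivAt.comp p hS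
  have HI : HasFDerivAt (fun q => fderiv ℝ f q Complex.I)
      ((ContinuousLinearMap.apply ℝ ℂ Complex.I).comp (fderiv ℝ (fderiv ℝ f) p)) p :=
    (ContinuousLinearMap.apply ℝ ℂ Complex.I).hasFDerivAt.comp p hS
  exact (H1.add (HI.const_mul Complex.I)).const_mul ((1:ℂ)/2)

lemma diff_wirtingerZ (hf : ContDiff ℝ 2 f) : Differentiable ℝ (wirtingerZ f) :=
  fun p => (hasFDerivAt_wirtingerZ hf p).differentiableAt

lemma wirtinger_mixed (hf : ContDiff ℝ 2 f) (p : ℂ) :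
    wirtingerZBar (wirtingerZ f) p = wirtingerZ (wirtingerZBar f) p := by
  set S := fderiv ℝ (fderiv ℝ f) p with hSdef
  have hS : HasFDerivAt (fderiv ℝ f) S p :=
    (((hf.fderiv_right (m := 1) (by norm_num)).differentiable (by norm_num)) p).hasFDerivAt
  have hsym : S 1 Complex.I = S Complex.I 1 :=
    second_derivative_symmetric
      (fun y => ((hf.differentiable (by norm_num)) y).hasFDerivAt) hS 1 Complex.I
  have e1 := (hasFDerivAt_wirtingerZ hf p).fderiv
  have e2 := (hasFDerivAt_wirtingerZBar hf p).fderiv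
  simp only [wirtingerZ, wirtingerZBar, e1, e2, ContinuousLinearMap.smul_apply,
    ContinuousLinearMap.sub_apply, ContinuousLinearMap.add_apply,
    ContinuousLinearMap.comp_apply, ContinuousLinearMap.apply_apply, smul_eq_mul]
  rw [hSdef] at hsym
  rw [hsym]
  ring

end Helpers

/-- The Beltrami equation `Z_z̄ = μ·Z_z` is invariant under the Darboux-type
transformation `Z ↦ Z₁ = Z − (W/W_z)·Z_z`. -/
theorem beltrami_darboux_invariance
    (μ Z W : ℂ → ℂ)
    (hμ : Differentiable ℝ μ)
    (hZ : ContDiff ℝ 2 Z) (hW : ContDiff ℝ 2 W)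
    (hWz : ∀ p, wirtingerZ W p ≠ 0)
    (hZbel : ∀ p, wirtingerZBar Z p = μ p * wirtingerZ Z p)
    (hWbel : ∀ p, wirtingerZBar W p = μ p * wirtingerZ W p)
    (Z1 : ℂ → ℂ)
    (hZ1 : Z1 = fun p => Z p - W p / wirtingerZ W p * wirtingerZ Z p) :
    Differentiable ℝ Z1 ∧ ∀ p, wirtingerZBar Z1 p = μ p * wirtingerZ Z1 p := by
  have hZd : Differentiable ℝ Z := hZ.differentiable (by norm_num)
  have hWd : Differentiable ℝ W := hW.differentiable (by norm_num)
  have haD : Differentiable ℝ (wirtingerZ Z) := diff_wirtingerZ hZ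
  have hbD : Differentiable ℝ (wirtingerZ W) := diff_wirtingerZ hW
  have hinvD : Differentiable ℝ (fun q => (wirtingerZ W q)⁻¹) :=
    fun p => (hbD p).inv (hWz p)
  have hZ1' : Z1 = fun q => Z q - W q * (wirtingerZ W q)⁻¹ * wirtingerZ Z q := by
    rw [hZ1]; funext q; rw [div_eq_mul_inv]
  have hWinvD : Differentiable ℝ (fun q => W q * (wirtingerZ W q)⁻¹) := hWd.mul hinvD
  have hgD : Differentiable ℝ (fun q => W q * (wirtingerZ W q)⁻¹ * wirtingerZ Z q) :=
    hWinvD.mul haD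
  refine ⟨by rw [hZ1']; exact hZd.sub hgD, ?_⟩
  intro p
  -- mixed derivative identities
  have haBar : wirtingerZBar (wirtingerZ Z) p
      = wirtingerZ μ p * wirtingerZ Z p + μ p * wirtingerZ (wirtingerZ Z) p := by
    have h1 : wirtingerZBar Z = fun q => μ q * wirtingerZ Z q := funext hZbel
    calc wirtingerZBar (wirtingerZ Z) p = wirtingerZ (wirtingerZBar Z) p :=
          wirtinger_mixed hZ p
      _ = wirtingerZ (fun q => μ q * wirtingerZ Z q) p := by rw [h1]
      _ = _ := wirtingerZ_mul (hμ p) (haD p)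
  have hbBar : wirtingerZBar (wirtingerZ W) p
      = wirtingerZ μ p * wirtingerZ W p + μ p * wirtingerZ (wirtingerZ W) p := by
    have h1 : wirtingerZBar W = fun q => μ q * wirtingerZ W q := funext hWbel
    calc wirtingerZBar (wirtingerZ W) p = wirtingerZ (wirtingerZBar W) p :=
          wirtinger_mixed hW p
      _ = wirtingerZ (fun q => μ q * wirtingerZ W q) p := by rw [h1]
      _ = _ := wirtingerZ_mul (hμ p) (hbD p)
  have hbinvZ : wirtingerZ (fun q => (wirtingerZ W q)⁻¹) p
      = - wirtingerZ (wirtingerZ W) p / (wirtingerZ W p) ^ 2 := wirtingerZ_inv hbD hWz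
  have hbinvZBar : wirtingerZBar (fun q => (wirtingerZ W q)⁻¹) p
      = - wirtingerZBar (wirtingerZ W) p / (wirtingerZ W p) ^ 2 := wirtingerZBar_inv hbD hWz
  rw [hZ1']
  rw [wirtingerZBar_sub (hZd p) (hgD p), wirtingerZ_sub (hZd p) (hgD p),
    wirtingerZBar_mul (hWinvD p) (haD p), wirtingerZ_mul (hWinvD p) (haD p),
    wirtingerZBar_mul (hWd p) (hinvD p), wirtingerZ_mul (hWd p) (hinvD p),
    hbinvZ, hbinvZBar, haBar, hbBar, hZbel p, hWbel p]
  have hb0 := hWz p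
  field_simp [hb0]
  ring
end

section
/- Let τ: ℤ³ → ℂ be nowhere zero and satisfy the discrete Hirota equation, and let f*: ℤ³ → ℂ satisfy the linear system f*_2 = f*_1 + (τ_12·τ/(τ_1·τ_2))·f* and f*_3 = f*_1 + (τ_13·τ/(τ_1·τ_3))·f* at every lattice point. Then the function τ̃ = f*·τ also satisfies the discrete Hirota equation at every lattice point. -/
/-- If `τ` solves the discrete Hirota equation and `f*` solves the associated
linear system, then `τ̃ = f*·τ` also solves the discrete Hirota equation. -/
theorem hirota_darboux_transform
    (τ fs : ℤ × ℤ × ℤ → ℂ)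
    (hτ : ∀ n, τ n ≠ 0)
    (hHirota : ∀ n : ℤ × ℤ × ℤ,
      τ (n + e1 + e2) * τ (n + e3) =
        τ (n + e2 + e3) * τ (n + e1) + τ (n + e1 + e3) * τ (n + e2))
    (hlin2 : ∀ n : ℤ × ℤ × ℤ,
      fs (n + e2) = fs (n + e1) + τ (n + e1 + e2) * τ n / (τ (n + e1) * τ (n + e2)) * fs n)
    (hlin3 : ∀ n : ℤ × ℤ × ℤ,
      fs (n + e3) = fs (n + e1) + τ (n + e1 + e3) * τ n / (τ (n + e1) * τ (n + e3)) * fs n)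
    (τ' : ℤ × ℤ × ℤ → ℂ) (hτ' : τ' = fun n => fs n * τ n) :
    ∀ n : ℤ × ℤ × ℤ,
      τ' (n + e1 + e2) * τ' (n + e3) =
        τ' (n + e2 + e3) * τ' (n + e1) + τ' (n + e1 + e3) * τ' (n + e2) := by
  subst hτ'
  intro n
  simp only
  have H0 := hHirota n
  have H1 := hHirota (n + e1)
  have h2 := hlin2 n
  have h3 := hlin3 n
  have h12 := hlin2 (n + e1)
  have h13 := hlin3 (n + e1)
  have h23 := hlin3 (n + e2)
  have p1 : n + e2 + e1 = n + e1 + e2 := by ring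
  rw [p1] at h23
  rw [h23, h12, h13, h2, h3]
  have t0 := hτ n
  have t1 := hτ (n + e1)
  have t2 := hτ (n + e2)
  have t3 := hτ (n + e3)
  have t11 := hτ (n + e1 + e1)
  have t12 := hτ (n + e1 + e2)
  have t13 := hτ (n + e1 + e3)
  have t23 := hτ (n + e2 + e3)
  field_simp
  linear_combination
    (fs (n + e1) * fs (n + e1 + e1) * τ (n + e1) * τ (n + e1 + e1) * τ (n + e1 + e2) +
      fs (n + e1) ^ 2 * τ (n + e1) ^ 2 * τ (n + e1 + e1 + e2)) * H0 +
    (fs (n + e1) ^ 2 * τ (n + e1) ^ 2 * τ (n + e2) +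
      fs (n + e1) * fs n * τ n * τ (n + e1) * τ (n + e1 + e2)) * H1
end

section
/- Let τ: ℤ³ → ℂ be nowhere zero and satisfy the discrete Hirota equation, and let f*: ℤ³ → ℂ be nowhere zero and satisfy the linear system f*_2 = f*_1 + (τ_12·τ/(τ_1·τ_2))·f* and f*_3 = f*_1 + (τ_13·τ/(τ_1·τ_3))·f* at every lattice point. Then f* satisfies the discrete dual KP wave function equation at every lattice point. -/
lemma key_alg (t t1 t2 t3 t12 t13 t23 t11 t112 t113 t123 f f1 f2 f3 g f12v f13v f23v : ℂ)
    (ht1 : t1 ≠ 0) (ht2 : t2 ≠ 0) (ht3 : t3 ≠ 0) (ht12 : t12 ≠ 0) (ht13 : t13 ≠ 0)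
    (ht23 : t23 ≠ 0) (ht11 : t11 ≠ 0)
    (hf1 : f1 ≠ 0) (hf2 : f2 ≠ 0) (hf3 : f3 ≠ 0)
    (H : t12 * t3 = t23 * t1 + t13 * t2)
    (H1 : t112 * t13 = t123 * t11 + t113 * t12)
    (h12 : f12v = g + t112 * t1 / (t11 * t12) * f1)
    (h13 : f13v = g + t113 * t1 / (t11 * t13) * f1)
    (h23 : f23v = f12v + t123 * t2 / (t12 * t23) * f2)
    (hl2 : f2 = f1 + t12 * t / (t1 * t2) * f)
    (hl3 : f3 = f1 + t13 * t / (t1 * t3) * f) :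
    (f13v - f12v) / f1 + (f12v - f23v) / f2 + (f23v - f13v) / f3 = 0 := by
  have p12 : t11 * t12 * f12v = t11 * t12 * g + t112 * t1 * f1 := by
    field_simp at h12; linear_combination h12
  have p13 : t11 * t13 * f13v = t11 * t13 * g + t113 * t1 * f1 := by
    field_simp at h13; linear_combination h13
  have p23 : t12 * t23 * f23v = t12 * t23 * f12v + t123 * t2 * f2 := by
    field_simp at h23; linear_combination h23
  have p2 : t1 * t2 * f2 = t1 * t2 * f1 + t12 * t * f := by
    field_simp at hl2; linear_combination hl2
  have p3 : t1 * t3 * f3 = t1 * t3 * f1 + t13 * t * f := by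
    field_simp at hl3; linear_combination hl3
  have d1 : t11 * (t12 * t13 * (f13v - f12v)) = t11 * (-(t1 * t123) * f1) := by
    linear_combination t12 * p13 - t13 * p12 - (t1 * f1) * H1
  have d1c : t12 * t13 * (f13v - f12v) = -(t1 * t123) * f1 := mul_left_cancel₀ ht11 d1
  have d3 : t1 * (t2 * t3 * (f3 - f2)) = t1 * (-(t * t23) * f) := by
    linear_combination t2 * p3 - t3 * p2 - (t * f) * H
  have d3c : t2 * t3 * (f3 - f2) = -(t * t23) * f := mul_left_cancel₀ ht1 d3
  have d4 : t1 * t3 * (f3 - f1) = t13 * t * f := by linear_combination p3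
  have P1 : (t12 * t13 * (f13v - f12v)) * (t1 * t3 * (f3 - f1)) =
      (-(t1 * t123) * f1) * (t13 * t * f) := by rw [d1c, d4]
  have P2 : (t12 * t23 * (f23v - f12v)) * (t2 * t3 * (f3 - f2)) =
      (t123 * t2 * f2) * (-(t * t23) * f) := by
    rw [d3c]
    linear_combination (-(t * t23) * f) * p23
  have G : t1 * t2 * t3 * t12 * t13 * t23 *
      ((f13v - f12v) * f2 * f3 + (f12v - f23v) * f1 * f3 + (f23v - f13v) * f1 * f2) = 0 := by
    linear_combination (t2 * t23 * f2) * P1 - (t13 * t1 * f1) * P2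
  have hT : t1 * t2 * t3 * t12 * t13 * t23 ≠ 0 := by
    simp [ht1, ht2, ht3, ht12, ht13, ht23]
  have G2 : (f13v - f12v) * f2 * f3 + (f12v - f23v) * f1 * f3 + (f23v - f13v) * f1 * f2 = 0 :=
    (mul_eq_zero.mp G).resolve_left hT
  field_simp
  linear_combination G2

/-- If `τ` solves the discrete Hirota equation and the nowhere-zero `f*` solves
the associated linear system, then `f*` satisfies the discrete dual KP wave
function equation. -/
theorem dual_wave_from_hirota
    (τ fs : ℤ × ℤ × ℤ → ℂ)
    (hτ : ∀ n, τ n ≠ 0) (hfs : ∀ n, fs n ≠ 0)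
    (hHirota : ∀ n : ℤ × ℤ × ℤ,
      τ (n + e1 + e2) * τ (n + e3) =
        τ (n + e2 + e3) * τ (n + e1) + τ (n + e1 + e3) * τ (n + e2))
    (hlin2 : ∀ n : ℤ × ℤ × ℤ,
      fs (n + e2) = fs (n + e1) + τ (n + e1 + e2) * τ n / (τ (n + e1) * τ (n + e2)) * fs n)
    (hlin3 : ∀ n : ℤ × ℤ × ℤ,
      fs (n + e3) = fs (n + e1) + τ (n + e1 + e3) * τ n / (τ (n + e1) * τ (n + e3)) * fs n) :
    ∀ n : ℤ × ℤ × ℤ,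
      (fs (n + e1 + e3) - fs (n + e1 + e2)) / fs (n + e1) +
      (fs (n + e1 + e2) - fs (n + e2 + e3)) / fs (n + e2) +
      (fs (n + e2 + e3) - fs (n + e1 + e3)) / fs (n + e3) = 0 := by
  intro n
  have h23 := hlin3 (n + e2)
  rw [show n + e2 + e1 = n + e1 + e2 by ring] at h23
  exact key_alg (τ n) (τ (n + e1)) (τ (n + e2)) (τ (n + e3)) (τ (n + e1 + e2))
    (τ (n + e1 + e3)) (τ (n + e2 + e3)) (τ (n + e1 + e1)) (τ (n + e1 + e1 + e2))
    (τ (n + e1 + e1 + e3)) (τ (n + e1 + e2 + e3))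
    (fs n) (fs (n + e1)) (fs (n + e2)) (fs (n + e3)) (fs (n + e1 + e1))
    (fs (n + e1 + e2)) (fs (n + e1 + e3)) (fs (n + e2 + e3))
    (hτ _) (hτ _) (hτ _) (hτ _) (hτ _) (hτ _) (hτ _) (hfs _) (hfs _) (hfs _)
    (hHirota n) (hHirota (n + e1)) (hlin2 (n + e1)) (hlin3 (n + e1)) h23
    (hlin2 n) (hlin3 n)
end

section
/- Let A, B, C, D, E, F be six pairwise distinct points of ℂ such that each of the sets {A,B,F}, {B,C,D}, {A,C,E}, {D,E,F} is collinear over ℝ (these are the six intersection points of four lines in general position), and such that each of the four triples (A,F,E), (B,F,D), (C,E,D), (A,B,C) is not collinear. Then there exists a point Q ∈ ℂ such that each of the four sets {A,F,E,Q}, {B,F,D,Q}, {C,E,D,Q}, {A,B,C,Q} is concyclic; that is, the four circumcircles of the triangles formed by four lines pass through a common point (Wallace's theorem). -/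
open Complex

lemma exists_circle {p q s : ℂ} (h : ¬ Collinear ℝ ({p, q, s} : Set ℂ)) :
    ∃ w : ℂ, ∃ r : ℝ, 0 < r ∧ dist p w = r ∧ dist q w = r ∧ dist s w = r := by
  have hpq : p ≠ q := by rintro rfl; exact h (by simpa using collinear_pair ℝ p s)
  have hind : AffineIndependent ℝ ![p, q, s] :=
    affineIndependent_iff_not_collinear_set.2 h
  let S : Affine.Simplex ℝ ℂ 2 := ⟨![p, q, s], hind⟩
  have h0 := S.dist_circumcenter_eq_circumradius 0
  have h1 := S.dist_circumcenter_eq_circumradius 1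
  have h2 := S.dist_circumcenter_eq_circumradius 2
  have hp0 : S.points 0 = p := rfl
  have hp1 : S.points 1 = q := rfl
  have hp2 : S.points 2 = s := rfl
  rw [hp0] at h0; rw [hp1] at h1; rw [hp2] at h2
  refine ⟨S.circumcenter, S.circumradius, ?_, h0, h1, h2⟩
  rcases lt_or_eq_of_le (dist_nonneg.trans_eq h0) with hlt | heq
  · exact hlt
  · exact absurd ((dist_eq_zero.1 (h0.trans heq.symm)).trans
      (dist_eq_zero.1 (h1.trans heq.symm)).symm) hpq

lemma notCol_of_circle {w : ℂ} {r : ℝ} {x y z : ℂ}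
    (hx : dist x w = r) (hy : dist y w = r) (hz : dist z w = r)
    (hxy : x ≠ y) (hxz : x ≠ z) (hyz : y ≠ z) :
    ¬ Collinear ℝ ({x, y, z} : Set ℂ) := by
  have hcos : EuclideanGeometry.Cospherical ({x, y, z} : Set ℂ) :=
    ⟨w, r, by rintro p (rfl | rfl | rfl) <;> assumption⟩
  have := hcos.affineIndependent (p := ![x, y, z]) (by
    intro a ha
    obtain ⟨i, rfl⟩ := ha
    fin_cases i <;> simp) (by
    intro i j hij
    fin_cases i <;> fin_cases j <;> simp_all)
  exact affineIndependent_iff_not_collinear_set.1 this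

lemma collinear_ratio {s : Set ℂ} (h : Collinear ℝ s) {x y z : ℂ}
    (hx : x ∈ s) (hy : y ∈ s) (hz : z ∈ s) (hxy : x ≠ y) :
    ∃ t : ℝ, z - x = (t : ℂ) * (y - x) := by
  obtain ⟨v, hv⟩ := (collinear_iff_of_mem hx).1 h
  obtain ⟨ty, hty⟩ := hv y hy
  obtain ⟨tz, htz⟩ := hv z hz
  have hy' : y - x = (ty : ℂ) * v := by rw [hty, vadd_eq_add, Complex.real_smul]; ring
  have hz' : z - x = (tz : ℂ) * v := by rw [htz, vadd_eq_add, Complex.real_smul]; ring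
  have hty0 : (ty : ℂ) ≠ 0 := by
    rintro h0
    exact hxy (by linear_combination -(hy'.trans (by rw [h0, zero_mul])))
  refine ⟨tz / ty, ?_⟩
  rw [hz', hy']
  push_cast
  field_simp

lemma collinear_of_ratio {x y z : ℂ} (t : ℝ) (h : z - x = (t : ℂ) * (y - x)) :
    Collinear ℝ ({x, y, z} : Set ℂ) := by
  apply (collinear_iff_of_mem (Set.mem_insert x _)).2
  refine ⟨y - x, ?_⟩
  rintro p (rfl | rfl | rfl)
  · exact ⟨0, by simp⟩
  · exact ⟨1, by simp⟩
  · exact ⟨t, by rw [Complex.real_smul, vadd_eq_add]; linear_combination h⟩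
set_option maxRecDepth 8000
set_option maxHeartbeats 2000000
open Complex

lemma circle_iff {z w : ℂ} {r : ℝ} (hr : 0 < r) :
    dist z w = r ↔ (z - w) * ((starRingEnd ℂ) z - (starRingEnd ℂ) w) = (r : ℂ)^2 := by
  rw [Complex.dist_eq, ← map_sub, Complex.mul_conj]
  constructor
  · intro h; rw [← Complex.sq_norm, h]; push_cast; ring
  · intro h
    have h2 : Complex.normSq (z - w) = r^2 := by exact_mod_cast h
    rw [Complex.norm_def, h2, Real.sqrt_sq hr.le]

lemma key (w : ℂ) (r : ℝ) (hr : 0 < r) (p q s t : ℂ)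
    (hp : dist p w = r) (hq : dist q w = r) (hs : dist s w = r)
    (hpq : p ≠ q) (hps : p ≠ s) (hqs : q ≠ s) (htp : t ≠ p) :
    (starRingEnd ℂ) ((t - s) * (q - p) / ((t - p) * (q - s))) =
      (t - s) * (q - p) / ((t - p) * (q - s)) ↔ dist t w = r := by
  have ha := (circle_iff (z := p) hr).1 hp
  have hb := (circle_iff (z := q) hr).1 hq
  have hc := (circle_iff (z := s) hr).1 hs
  rw [circle_iff (z := t) hr]
  have hr2 : ((r:ℂ))^2 ≠ 0 := by
    have : (r:ℂ) ≠ 0 := by exact_mod_cast hr.ne'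
    exact pow_ne_zero 2 this
  have ha0 : p - w ≠ 0 := fun h0 => hr2 (by rw [← ha, h0, zero_mul])
  have hb0 : q - w ≠ 0 := fun h0 => hr2 (by rw [← hb, h0, zero_mul])
  have hc0 : s - w ≠ 0 := fun h0 => hr2 (by rw [← hc, h0, zero_mul])
  have htp' : t - p ≠ 0 := sub_ne_zero.2 htp
  have hqs' : q - s ≠ 0 := sub_ne_zero.2 hqs
  have hqp' : q - p ≠ 0 := sub_ne_zero.2 (Ne.symm hpq)
  have hps' : p - s ≠ 0 := sub_ne_zero.2 hps
  have conj_ne : ∀ z : ℂ, z ≠ 0 → (starRingEnd ℂ) z ≠ 0 := by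
    intro z hz h0
    exact hz (by simpa using congrArg (starRingEnd ℂ) h0)
  have hcp : (starRingEnd ℂ) p = (starRingEnd ℂ) w + (r:ℂ)^2 / (p - w) := by
    field_simp
    linear_combination ha
  have hcq : (starRingEnd ℂ) q = (starRingEnd ℂ) w + (r:ℂ)^2 / (q - w) := by
    field_simp
    linear_combination hb
  have hcs : (starRingEnd ℂ) s = (starRingEnd ℂ) w + (r:ℂ)^2 / (s - w) := by
    field_simp
    linear_combination hc
  rw [map_div₀, map_mul, map_mul, map_sub, map_sub, map_sub, map_sub,
    div_eq_div_iff (mul_ne_zero (by rw [← map_sub]; exact conj_ne _ htp')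
      (by rw [← map_sub]; exact conj_ne _ hqs')) (mul_ne_zero htp' hqs')]
  rw [hcp, hcq, hcs]
  constructor
  · intro h
    have hfac : ((p - w) * (q - w) * (s - w) * ((q - p) * (q - s) * (p - s)) * (r:ℂ)^2) *
        ((t - w) * ((starRingEnd ℂ) t - (starRingEnd ℂ) w) - (r:ℂ)^2) = 0 := by
      field_simp at h
      linear_combination (p - w) * (q - w) * (s - w) * h
    rcases mul_eq_zero.1 hfac with h1 | h1
    · exfalso
      rcases mul_eq_zero.1 h1 with h2 | h2
      · rcases mul_eq_zero.1 h2 with h3 | h3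
        · rcases mul_eq_zero.1 h3 with h4 | h4
          · rcases mul_eq_zero.1 h4 with h5 | h5
            · exact ha0 h5
            · exact hb0 h5
          · exact hc0 h4
        · rcases mul_eq_zero.1 h3 with h4 | h4
          · rcases mul_eq_zero.1 h4 with h5 | h5
            · exact hqp' h5
            · exact hqs' h5
          · exact hps' h4
      · exact hr2 h2
    · linear_combination h1
  · intro h
    have htw0 : t - w ≠ 0 := fun h0 => hr2 (by rw [← h, h0, zero_mul])
    have hct : (starRingEnd ℂ) t = (starRingEnd ℂ) w + (r:ℂ)^2 / (t - w) := by
      field_simp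
      linear_combination h
    rw [hct]
    field_simp
    ring


/-- A set of points of ℂ is concyclic if it is contained in a circle of positive radius. -/
def ConcyclicSet (s : Set ℂ) : Prop :=
  ∃ (z : ℂ) (r : ℝ), 0 < r ∧ ∀ p ∈ s, dist p z = r

/-- **Wallace's theorem**: the four circumcircles of the triangles formed by four
lines in general position pass through a common point. -/
theorem wallace_theorem
    (A B C D E F : ℂ)
    (hdist : [A, B, C, D, E, F].Pairwise (· ≠ ·))
    (hABF : Collinear ℝ ({A, B, F} : Set ℂ))
    (hBCD : Collinear ℝ ({B, C, D} : Set ℂ))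
    (hACE : Collinear ℝ ({A, C, E} : Set ℂ))
    (hDEF : Collinear ℝ ({D, E, F} : Set ℂ))
    (hnc1 : ¬ Collinear ℝ ({A, F, E} : Set ℂ))
    (hnc2 : ¬ Collinear ℝ ({B, F, D} : Set ℂ))
    (hnc3 : ¬ Collinear ℝ ({C, E, D} : Set ℂ))
    (hnc4 : ¬ Collinear ℝ ({A, B, C} : Set ℂ)) :
    ∃ Q : ℂ, ConcyclicSet {A, F, E, Q} ∧ ConcyclicSet {B, F, D, Q} ∧
      ConcyclicSet {C, E, D, Q} ∧ ConcyclicSet {A, B, C, Q} := by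
  simp only [List.pairwise_cons, List.mem_cons, List.not_mem_nil, List.mem_singleton,
    forall_eq_or_imp, forall_eq, List.Pairwise.nil, and_true, IsEmpty.forall_iff] at hdist
  obtain ⟨⟨hAB, hAC, hAD, hAE, hAF, -⟩, ⟨hBC, hBD, hBE, hBF, -⟩, ⟨hCD, hCE, hCF, -⟩, ⟨hDE, hDF, -⟩, hEF, -⟩ := hdist
  obtain ⟨hEF, -⟩ := hEF
  obtain ⟨w1, r1, hr1, h1A, h1F, h1E⟩ := exists_circle hnc1
  obtain ⟨w2, r2, hr2, h2B, h2F, h2D⟩ := exists_circle hnc2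
  obtain ⟨w3, r3, hr3, h3C, h3E, h3D⟩ := exists_circle hnc3
  obtain ⟨w4, r4, hr4, h4A, h4B, h4C⟩ := exists_circle hnc4
  -- the two circles have different centers
  have hw12 : w2 ≠ w1 := by
    rintro rfl
    have hr12 : r1 = r2 := by rw [← h1F, ← h2F]
    exact notCol_of_circle h1A (hr12 ▸ h2B) h1F hAB hAF hBF hABF
  have hn0 : w2 - w1 ≠ 0 := sub_ne_zero.2 hw12
  have conj_ne : ∀ z : ℂ, z ≠ 0 → (starRingEnd ℂ) z ≠ 0 := by
    intro z hz h0
    exact hz (by simpa using congrArg (starRingEnd ℂ) h0)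
  have hcn0 : (starRingEnd ℂ) (w2 - w1) ≠ 0 := conj_ne _ hn0
  have hFw1 : F - w1 ≠ 0 := by
    intro h0
    rw [sub_eq_zero] at h0
    rw [h0] at h1F
    simp at h1F
    exact hr1.ne h1F
  have hFw2 : F - w2 ≠ 0 := by
    intro h0
    rw [sub_eq_zero] at h0
    rw [h0] at h2F
    simp at h2F
    exact hr2.ne h2F
  set Q : ℂ := w1 + (w2 - w1) * (starRingEnd ℂ) (F - w1) / (starRingEnd ℂ) (w2 - w1) with hQdef
  have hQw1 : Q - w1 = (w2 - w1) * (starRingEnd ℂ) (F - w1) / (starRingEnd ℂ) (w2 - w1) := by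
    rw [hQdef]; ring
  have hQw1' : (Q - w1) * (starRingEnd ℂ) (w2 - w1) = (w2 - w1) * (starRingEnd ℂ) (F - w1) := by
    rw [hQw1, div_mul_cancel₀ _ hcn0]
  have hQw2 : Q - w2 = (w2 - w1) * (starRingEnd ℂ) (F - w2) / (starRingEnd ℂ) (w2 - w1) := by
    rw [eq_div_iff hcn0]
    have h1 := hQw1'
    rw [map_sub, map_sub] at h1 ⊢
    linear_combination h1
  have habs : ∀ (n m : ℂ), n ≠ 0 → ‖n * (starRingEnd ℂ) m / (starRingEnd ℂ) n‖ =
      ‖m‖ := by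
    intro n m hn
    have hn' : ‖n‖ ≠ 0 := norm_ne_zero_iff.2 hn
    rw [norm_div, norm_mul, Complex.norm_conj, Complex.norm_conj, mul_comm,
      mul_div_assoc, div_self hn', mul_one]
  have hQ1 : dist Q w1 = r1 := by
    rw [Complex.dist_eq, hQw1, habs _ _ hn0, ← Complex.dist_eq]
    exact h1F
  have hQ2 : dist Q w2 = r2 := by
    rw [Complex.dist_eq, hQw2, habs _ _ hn0, ← Complex.dist_eq]
    exact h2F
  clear hQdef hQw1 hQw2
  clear_value Q
  -- Q is distinct from the six points
  have hQA : Q ≠ A := by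
    rintro rfl
    exact notCol_of_circle hQ2 h2B h2F hAB hAF hBF hABF
  have hQB : Q ≠ B := by
    rintro rfl
    exact notCol_of_circle h1A hQ1 h1F hAB hAF hBF hABF
  have hQC : Q ≠ C := by
    rintro rfl
    exact notCol_of_circle h1A hQ1 h1E hAC hAE hCE hACE
  have hQD : Q ≠ D := by
    rintro rfl
    exact notCol_of_circle hQ1 h1E h1F hDE hDF hEF hDEF
  have hQE : Q ≠ E := by
    rintro rfl
    exact notCol_of_circle h2D hQ2 h2F hDE hDF hEF hDEF
  have hQF : Q ≠ F := by
    intro hQFe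
    have hm : (w2 - w1) * (starRingEnd ℂ) (F - w1) = (F - w1) * (starRingEnd ℂ) (w2 - w1) := by
      have h1 := hQw1'
      rw [hQFe] at h1
      linear_combination - h1
    set sr : ℝ := ((F - w1) / (w2 - w1)).re with hsdef
    have hreal : (starRingEnd ℂ) ((F - w1) / (w2 - w1)) = (F - w1) / (w2 - w1) := by
      rw [map_div₀, div_eq_div_iff hcn0 hn0]
      linear_combination hm
    have hsval : ((sr : ℝ) : ℂ) = (F - w1) / (w2 - w1) := Complex.conj_eq_iff_re.1 hreal
    have hsr : F - w1 = (sr : ℂ) * (w2 - w1) := by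
      rw [hsval, div_mul_cancel₀ _ hn0]
    have hs0 : (sr : ℂ) ≠ 0 := by
      intro h0; rw [h0, zero_mul] at hsr; exact hFw1 hsr
    have hs1 : (sr : ℂ) ≠ 1 := by
      intro h1; rw [h1, one_mul] at hsr
      exact hFw2 (by linear_combination hsr)
    have hsr2 : F - w2 = ((sr : ℂ) - 1) * (w2 - w1) := by linear_combination hsr
    have hcsr : (starRingEnd ℂ) F - (starRingEnd ℂ) w1 =
        (sr : ℂ) * ((starRingEnd ℂ) w2 - (starRingEnd ℂ) w1) := by
      have := congrArg (starRingEnd ℂ) hsr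
      simpa [map_sub, map_mul, Complex.conj_ofReal] using this
    have hcsr2 : (starRingEnd ℂ) F - (starRingEnd ℂ) w2 =
        ((sr : ℂ) - 1) * ((starRingEnd ℂ) w2 - (starRingEnd ℂ) w1) := by
      have := congrArg (starRingEnd ℂ) hsr2
      simpa [map_sub, map_mul, Complex.conj_ofReal] using this
    -- collinearity ratios
    obtain ⟨β, hβ⟩ := collinear_ratio (x := F) (y := A) (z := B) hABF (by simp) (by simp) (by simp) (Ne.symm hAF) -- B - F = β (A - F)
    obtain ⟨δ, hδ⟩ := collinear_ratio (x := F) (y := E) (z := D) hDEF (by simp) (by simp) (by simp) (Ne.symm hEF) -- D - F = δ (E - F)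
    have hβ0 : (β : ℂ) ≠ 0 := by
      intro h0; rw [h0, zero_mul] at hβ
      exact hBF (by linear_combination hβ)
    have hδ0 : (δ : ℂ) ≠ 0 := by
      intro h0; rw [h0, zero_mul] at hδ
      exact hDF (by linear_combination hδ)
    have hcβ : (starRingEnd ℂ) B - (starRingEnd ℂ) F =
        (β : ℂ) * ((starRingEnd ℂ) A - (starRingEnd ℂ) F) := by
      have := congrArg (starRingEnd ℂ) hβ
      simpa [map_sub, map_mul, Complex.conj_ofReal] using this
    have hcδ : (starRingEnd ℂ) D - (starRingEnd ℂ) F =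
        (δ : ℂ) * ((starRingEnd ℂ) E - (starRingEnd ℂ) F) := by
      have := congrArg (starRingEnd ℂ) hδ
      simpa [map_sub, map_mul, Complex.conj_ofReal] using this
    -- circle equations
    have eA := (circle_iff (z := A) hr1).1 h1A
    have eE := (circle_iff (z := E) hr1).1 h1E
    have eF1 := (circle_iff (z := F) hr1).1 h1F
    have eB := (circle_iff (z := B) hr2).1 h2B
    have eD := (circle_iff (z := D) hr2).1 h2D
    have eF2 := (circle_iff (z := F) hr2).1 h2F
    have tA : (A - F) * ((starRingEnd ℂ) A - (starRingEnd ℂ) F)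
        + (A - F) * ((starRingEnd ℂ) F - (starRingEnd ℂ) w1)
        + ((starRingEnd ℂ) A - (starRingEnd ℂ) F) * (F - w1) = 0 := by
      linear_combination eA - eF1
    have tE : (E - F) * ((starRingEnd ℂ) E - (starRingEnd ℂ) F)
        + (E - F) * ((starRingEnd ℂ) F - (starRingEnd ℂ) w1)
        + ((starRingEnd ℂ) E - (starRingEnd ℂ) F) * (F - w1) = 0 := by
      linear_combination eE - eF1
    have tB : (B - F) * ((starRingEnd ℂ) B - (starRingEnd ℂ) F)
        + (B - F) * ((starRingEnd ℂ) F - (starRingEnd ℂ) w2)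
        + ((starRingEnd ℂ) B - (starRingEnd ℂ) F) * (F - w2) = 0 := by
      linear_combination eB - eF2
    have tD : (D - F) * ((starRingEnd ℂ) D - (starRingEnd ℂ) F)
        + (D - F) * ((starRingEnd ℂ) F - (starRingEnd ℂ) w2)
        + ((starRingEnd ℂ) D - (starRingEnd ℂ) F) * (F - w2) = 0 := by
      linear_combination eD - eF2
    rw [hsr, hcsr] at tA tE
    rw [hβ, hcβ, hsr2, hcsr2] at tB
    rw [hδ, hcδ, hsr2, hcsr2] at tD
    -- non-vanishing of |A-F|^2 and |E-F|^2
    have hXA : (A - F) * ((starRingEnd ℂ) A - (starRingEnd ℂ) F) ≠ 0 :=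
      mul_ne_zero (sub_ne_zero.2 hAF) (by rw [← map_sub]; exact conj_ne _ (sub_ne_zero.2 hAF))
    have hXE : (E - F) * ((starRingEnd ℂ) E - (starRingEnd ℂ) F) ≠ 0 :=
      mul_ne_zero (sub_ne_zero.2 hEF) (by rw [← map_sub]; exact conj_ne _ (sub_ne_zero.2 hEF))
    have claimA : ((β : ℂ) * ((sr : ℂ) * (β : ℂ) - ((sr : ℂ) - 1))) *
        ((A - F) * ((starRingEnd ℂ) A - (starRingEnd ℂ) F)) = 0 := by
      linear_combination (sr : ℂ) * tB - (β : ℂ) * ((sr : ℂ) - 1) * tA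
    have claimE : ((δ : ℂ) * ((sr : ℂ) * (δ : ℂ) - ((sr : ℂ) - 1))) *
        ((E - F) * ((starRingEnd ℂ) E - (starRingEnd ℂ) F)) = 0 := by
      linear_combination (sr : ℂ) * tD - (δ : ℂ) * ((sr : ℂ) - 1) * tE
    have fA : (sr : ℂ) * (β : ℂ) - ((sr : ℂ) - 1) = 0 := by
      rcases mul_eq_zero.1 claimA with h1 | h1
      · rcases mul_eq_zero.1 h1 with h2 | h2
        · exact absurd h2 hβ0
        · exact h2
      · exact absurd h1 hXA
    have fE : (sr : ℂ) * (δ : ℂ) - ((sr : ℂ) - 1) = 0 := by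
      rcases mul_eq_zero.1 claimE with h1 | h1
      · rcases mul_eq_zero.1 h1 with h2 | h2
        · exact absurd h2 hδ0
        · exact h2
      · exact absurd h1 hXE
    have hβδ : (β : ℂ) = (δ : ℂ) := by
      have hz : (sr : ℂ) * ((β : ℂ) - (δ : ℂ)) = 0 := by linear_combination fA - fE
      rcases mul_eq_zero.1 hz with h1 | h1
      · exact absurd h1 hs0
      · linear_combination h1
    have hDB : D - B = (β : ℂ) * (E - A) := by
      linear_combination hδ - hβ - (E - F) * hβδ
    -- C is on both lines ⇒ A, E, F collinear, contradiction
    obtain ⟨tc, htc⟩ := collinear_ratio (x := B) (y := D) (z := C) hBCD (by simp) (by simp) (by simp) hBD -- C - B = tc (D - B)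
    obtain ⟨tc', htc'⟩ := collinear_ratio (x := A) (y := E) (z := C) hACE (by simp) (by simp) (by simp) hAE -- C - A = tc' (E - A)
    obtain ⟨γ, hγ⟩ := collinear_ratio (x := A) (y := B) (z := F) hABF (by simp) (by simp) (by simp) hAB -- F - A = γ (B - A)
    have hfin : F - A = ((γ * (tc' - tc * β) : ℝ) : ℂ) * (E - A) := by
      push_cast
      linear_combination hγ + (γ : ℂ) * (htc' - htc - (tc : ℂ) * hDB)
    have hcol := collinear_of_ratio _ hfin
    rw [Set.pair_comm E F] at hcol
    exact hnc1 hcol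
  -- cross-ratio facts for circles 1 and 2 (pivot F)
  have cr1 := (key w1 r1 hr1 F E A Q h1F h1E h1A (Ne.symm hEF) (Ne.symm hAF) (Ne.symm hAE) hQF).2 hQ1
  have cr2 := (key w2 r2 hr2 F D B Q h2F h2D h2B (Ne.symm hDF) (Ne.symm hBF) (Ne.symm hBD) hQF).2 hQ2
  -- collinearity ratios for circle 4
  obtain ⟨t1, ht1⟩ := collinear_ratio (x := A) (y := E) (z := C) hACE (by simp) (by simp) (by simp) hAE
  obtain ⟨t2, ht2⟩ := collinear_ratio (x := B) (y := C) (z := D) hBCD (by simp) (by simp) (by simp) hBC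
  obtain ⟨t3, ht3⟩ := collinear_ratio (x := F) (y := D) (z := E) hDEF (by simp) (by simp) (by simp) (Ne.symm hDF)
  have sQA : Q - A ≠ 0 := sub_ne_zero.2 hQA
  have sQB : Q - B ≠ 0 := sub_ne_zero.2 hQB
  have sQE : Q - E ≠ 0 := sub_ne_zero.2 hQE
  have sQF : Q - F ≠ 0 := sub_ne_zero.2 hQF
  have sEA : E - A ≠ 0 := sub_ne_zero.2 (Ne.symm hAE)
  have sCA : C - A ≠ 0 := sub_ne_zero.2 (Ne.symm hAC)
  have sCB : C - B ≠ 0 := sub_ne_zero.2 (Ne.symm hBC)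
  have sDB : D - B ≠ 0 := sub_ne_zero.2 (Ne.symm hBD)
  have sDF : D - F ≠ 0 := sub_ne_zero.2 hDF
  have sDC : D - C ≠ 0 := sub_ne_zero.2 (Ne.symm hCD)
  have sBA : B - A ≠ 0 := sub_ne_zero.2 (Ne.symm hAB)
  have sBC : B - C ≠ 0 := sub_ne_zero.2 hBC
  have sFA : F - A ≠ 0 := sub_ne_zero.2 (Ne.symm hAF)
  have sFE : F - E ≠ 0 := sub_ne_zero.2 (Ne.symm hEF)
  have sEF : E - F ≠ 0 := sub_ne_zero.2 hEF
  have sDE : D - E ≠ 0 := sub_ne_zero.2 hDE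
  have ht1n : (t1 : ℂ) ≠ 0 := by intro h0; rw [h0, zero_mul] at ht1; exact sCA ht1
  have ht2n : (t2 : ℂ) ≠ 0 := by intro h0; rw [h0, zero_mul] at ht2; exact sDB ht2
  have ht3n : (t3 : ℂ) ≠ 0 := by intro h0; rw [h0, zero_mul] at ht3; exact sEF ht3
  have hρ4 : (Q - A) * (E - F) / ((Q - F) * (E - A)) =
      ((Q - A) * (C - B) / ((Q - B) * (C - A))) *
        (((Q - B) * (D - F) / ((Q - F) * (D - B))) * ((t1 * t2 * t3 : ℝ) : ℂ)) := by
    rw [ht3, ht2, ht1]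
    push_cast
    field_simp
  have hρ2T : ((Q - B) * (D - F) / ((Q - F) * (D - B))) * ((t1 * t2 * t3 : ℝ) : ℂ) ≠ 0 := by
    apply mul_ne_zero
    · exact div_ne_zero (mul_ne_zero sQB sDF) (mul_ne_zero sQF sDB)
    · push_cast
      exact mul_ne_zero (mul_ne_zero ht1n ht2n) ht3n
  have cρ4 : (starRingEnd ℂ) ((Q - A) * (C - B) / ((Q - B) * (C - A))) =
      (Q - A) * (C - B) / ((Q - B) * (C - A)) := by
    have h2 := congrArg (starRingEnd ℂ) hρ4
    rw [map_mul, map_mul, Complex.conj_ofReal, cr1, cr2] at h2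
    exact mul_right_cancel₀ hρ2T (h2.symm.trans hρ4)
  have hQ4 : dist Q w4 = r4 :=
    (key w4 r4 hr4 B C A Q h4B h4C h4A hBC (Ne.symm hAB) (Ne.symm hAC) hQB).1 cρ4
  -- circle 3
  have cr1' := (key w1 r1 hr1 A F E Q h1A h1F h1E hAF hAE (Ne.symm hEF) hQA).2 hQ1
  have cr4' := (key w4 r4 hr4 A B C Q h4A h4B h4C hAB hAC hBC hQA).2 hQ4
  obtain ⟨u1, hu1⟩ := collinear_ratio (x := A) (y := B) (z := F) hABF (by simp) (by simp) (by simp) hAB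
  obtain ⟨u2, hu2⟩ := collinear_ratio (x := C) (y := D) (z := B) hBCD (by simp) (by simp) (by simp) hCD
  obtain ⟨u3, hu3⟩ := collinear_ratio (x := E) (y := F) (z := D) hDEF (by simp) (by simp) (by simp) hEF
  have hu1n : (u1 : ℂ) ≠ 0 := by intro h0; rw [h0, zero_mul] at hu1; exact sFA hu1
  have hu2n : (u2 : ℂ) ≠ 0 := by intro h0; rw [h0, zero_mul] at hu2; exact sBC hu2
  have hu3n : (u3 : ℂ) ≠ 0 := by intro h0; rw [h0, zero_mul] at hu3; exact sDE hu3
  have hρ3 : ((Q - C) * (B - A) / ((Q - A) * (B - C))) * ((u1 * u2 * u3 : ℝ) : ℂ) =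
      ((Q - C) * (D - E) / ((Q - E) * (D - C))) *
        ((Q - E) * (F - A) / ((Q - A) * (F - E))) := by
    rw [hu3, hu2, hu1]
    push_cast
    field_simp
  have hσ1n : (Q - E) * (F - A) / ((Q - A) * (F - E)) ≠ 0 :=
    div_ne_zero (mul_ne_zero sQE sFA) (mul_ne_zero sQA sFE)
  have cρ3 : (starRingEnd ℂ) ((Q - C) * (D - E) / ((Q - E) * (D - C))) =
      (Q - C) * (D - E) / ((Q - E) * (D - C)) := by
    have h2 := congrArg (starRingEnd ℂ) hρ3
    rw [map_mul, map_mul, Complex.conj_ofReal, cr4', cr1'] at h2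
    exact mul_right_cancel₀ hσ1n (h2.symm.trans hρ3)
  have hQ3 : dist Q w3 = r3 :=
    (key w3 r3 hr3 E D C Q h3E h3D h3C (Ne.symm hDE) (Ne.symm hCE) (Ne.symm hCD) hQE).1 cρ3
  refine ⟨Q, ⟨w1, r1, hr1, ?_⟩, ⟨w2, r2, hr2, ?_⟩, ⟨w3, r3, hr3, ?_⟩, ⟨w4, r4, hr4, ?_⟩⟩ <;>
    rintro p (rfl | rfl | rfl | rfl) <;> assumption
end

section
/- Let Φ: ℤ³ → ℂ satisfy the discrete Schwarzian KP equation at every lattice point (with all six differences occurring in the multi-ratio nonzero at every point), and suppose Φ satisfies the constraint Φ(n + e₂ + e₃) = Φ(n) for all n ∈ ℤ³. Assume moreover that at every lattice point the differences Φ−Φ_1, Φ_1−Φ_12, Φ_12−Φ_2, Φ_2−Φ are nonzero. Then the cross-ratio Q(Φ, Φ_1, Φ_12, Φ_2) is invariant under the shift by e₂: for all n ∈ ℤ³, Q(Φ,Φ_1,Φ_12,Φ_2)(n + e₂) = Q(Φ,Φ_1,Φ_12,Φ_2)(n). This is the reduction of the dSKP equation to the discrete Schwarzian KdV equation. -/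
/-- The cross-ratio of four complex numbers. -/
noncomputable def crossRatio (P1 P2 P3 P4 : ℂ) : ℂ :=
  ((P1 - P2) * (P3 - P4)) / ((P2 - P3) * (P4 - P1))

/-- **Reduction of the dSKP equation to the discrete Schwarzian KdV equation**:
under the constraint `Φ_23 = Φ`, the cross-ratio `Q(Φ,Φ_1,Φ_12,Φ_2)` is
invariant under the shift by `e₂`. -/
theorem dskp_to_dskdv
    (Φ : ℤ × ℤ × ℤ → ℂ)
    (hne : ∀ n : ℤ × ℤ × ℤ,
      Φ (n + e1) - Φ (n + e1 + e2) ≠ 0 ∧ Φ (n + e1 + e2) - Φ (n + e2) ≠ 0 ∧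
      Φ (n + e2) - Φ (n + e2 + e3) ≠ 0 ∧ Φ (n + e2 + e3) - Φ (n + e3) ≠ 0 ∧
      Φ (n + e3) - Φ (n + e1 + e3) ≠ 0 ∧ Φ (n + e1 + e3) - Φ (n + e1) ≠ 0)
    (hdskp : ∀ n : ℤ × ℤ × ℤ,
      multiRatio (Φ (n + e1)) (Φ (n + e1 + e2)) (Φ (n + e2)) (Φ (n + e2 + e3))
        (Φ (n + e3)) (Φ (n + e1 + e3)) = -1)
    (hconstraint : ∀ n : ℤ × ℤ × ℤ, Φ (n + e2 + e3) = Φ n)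
    (hne' : ∀ n : ℤ × ℤ × ℤ,
      Φ n - Φ (n + e1) ≠ 0 ∧ Φ (n + e1) - Φ (n + e1 + e2) ≠ 0 ∧
      Φ (n + e1 + e2) - Φ (n + e2) ≠ 0 ∧ Φ (n + e2) - Φ n ≠ 0) :
    ∀ n : ℤ × ℤ × ℤ,
      crossRatio (Φ (n + e2)) (Φ (n + e2 + e1)) (Φ (n + e2 + e1 + e2)) (Φ (n + e2 + e2)) =
        crossRatio (Φ n) (Φ (n + e1)) (Φ (n + e1 + e2)) (Φ (n + e2)) := by
  intro n
  have key := hdskp (n + e2)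
  have hswap : n + e2 + e1 = n + e1 + e2 := add_right_comm n e2 e1
  rw [hswap] at key ⊢
  -- rewrite the three `e3`-shifted values using the constraint
  have c1 : Φ (n + e2 + e2 + e3) = Φ (n + e2) := hconstraint (n + e2)
  have c2 : Φ (n + e2 + e3) = Φ n := hconstraint n
  have c3 : Φ (n + e1 + e2 + e3) = Φ (n + e1) := hconstraint (n + e1)
  rw [c1, c2, c3] at key
  obtain ⟨h01, h1x, hx2, h20⟩ := hne' n
  obtain ⟨_, hxb, hbc, hc2⟩ := hne' (n + e2)
  rw [hswap] at hxb hbc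
  set x0 := Φ n
  set x1 := Φ (n + e1)
  set x2 := Φ (n + e2)
  set x12 := Φ (n + e1 + e2)
  set b := Φ (n + e1 + e2 + e2)
  set c := Φ (n + e2 + e2)
  -- `hbc` currently relates `Φ (n+e1+e2+e2)` vs `b`? fix index shapes
  unfold multiRatio at key
  unfold crossRatio
  rw [div_eq_iff (mul_ne_zero (mul_ne_zero hbc h20) h1x)] at key
  rw [div_eq_div_iff (mul_ne_zero hxb hc2) (mul_ne_zero h1x h20)]
  linear_combination (Φ (n + e2) - Φ (n + e1 + e2)) * key
end

section
/- Let Φ: ℤ³ → ℂ satisfy the discrete Schwarzian KP equation at every lattice point (with all six differences occurring in the multi-ratio nonzero at every point), and suppose Φ satisfies the constraint Φ(n + e₁ + e₂ + e₃) = Φ(n) for all n ∈ ℤ³. Then at every n ∈ ℤ³, M(Φ(n+e₁), Φ(n+e₁+e₂), Φ(n+e₂), Φ(n−e₁), Φ(n−e₁−e₂), Φ(n−e₂)) = −1; that is, Φ satisfies the discrete Schwarzian Boussinesq equation. -/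
/-- **Reduction of the dSKP equation to the discrete Schwarzian Boussinesq
equation**: under the constraint `Φ_123 = Φ`, the lattice satisfies
`M(Φ_1, Φ_12, Φ_2, Φ_1̄, Φ_1̄2̄, Φ_2̄) = −1`. -/
theorem dskp_to_dsbq
    (Φ : ℤ × ℤ × ℤ → ℂ)
    (hne : ∀ n : ℤ × ℤ × ℤ,
      Φ (n + e1) - Φ (n + e1 + e2) ≠ 0 ∧ Φ (n + e1 + e2) - Φ (n + e2) ≠ 0 ∧
      Φ (n + e2) - Φ (n + e2 + e3) ≠ 0 ∧ Φ (n + e2 + e3) - Φ (n + e3) ≠ 0 ∧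
      Φ (n + e3) - Φ (n + e1 + e3) ≠ 0 ∧ Φ (n + e1 + e3) - Φ (n + e1) ≠ 0)
    (hdskp : ∀ n : ℤ × ℤ × ℤ,
      multiRatio (Φ (n + e1)) (Φ (n + e1 + e2)) (Φ (n + e2)) (Φ (n + e2 + e3))
        (Φ (n + e3)) (Φ (n + e1 + e3)) = -1)
    (hconstraint : ∀ n : ℤ × ℤ × ℤ, Φ (n + e1 + e2 + e3) = Φ n) :
    ∀ n : ℤ × ℤ × ℤ,
      multiRatio (Φ (n + e1)) (Φ (n + e1 + e2)) (Φ (n + e2))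
        (Φ (n - e1)) (Φ (n - e1 - e2)) (Φ (n - e2)) = -1 := by
  intro n
  have a1 : Φ (n + e2 + e3) = Φ (n - e1) := by
    rw [← hconstraint (n - e1)]; congr 1; abel
  have a2 : Φ (n + e3) = Φ (n - e1 - e2) := by
    rw [← hconstraint (n - e1 - e2)]; congr 1; abel
  have a3 : Φ (n + e1 + e3) = Φ (n - e2) := by
    rw [← hconstraint (n - e2)]; congr 1; abel
  have key := hdskp n
  rwa [a1, a2, a3] at key
end

section
/- Let ω₁, ω₁₂, ω₂, ω₂₃, ω₃, ω₁₃ be real numbers such that sin(ω₁−ω₁₂), sin(ω₁₂−ω₂), sin(ω₂−ω₂₃), sin(ω₂₃−ω₃), sin(ω₃−ω₁₃), sin(ω₁₃−ω₁) are all nonzero. Then M(e^{2iω₁}, e^{2iω₁₂}, e^{2iω₂}, e^{2iω₂₃}, e^{2iω₃}, e^{2iω₁₃}) = −1 if and only if sin(ω₁−ω₁₂)·sin(ω₂−ω₂₃)·sin(ω₃−ω₁₃) = −sin(ω₁₂−ω₂)·sin(ω₂₃−ω₃)·sin(ω₁₃−ω₁). That is, for lattice points lying on the unit circle, parametrized as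 Φ = e^{2iω}, the dSKP multi-ratio condition reduces to the stated trigonometric relation. -/
open Complex Real

lemma exp_two_sub (a b : ℂ) : Complex.exp (2*Complex.I*a) - Complex.exp (2*Complex.I*b)
    = 2*Complex.I*Complex.exp (Complex.I*(a+b)) * Complex.sin (a-b) := by
  rw [Complex.sin]
  field_simp
  ring_nf
  simp only [mul_assoc, ← Complex.exp_add, Complex.I_sq]
  ring_nf

/-- For points on the unit circle, parametrized as `Φ = e^{2iω}`, the dSKP
multi-ratio condition reduces to a trigonometric relation. -/
theorem dskp_on_circle
    (ω1 ω12 ω2 ω23 ω3 ω13 : ℝ)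
    (h1 : Real.sin (ω1 - ω12) ≠ 0) (h2 : Real.sin (ω12 - ω2) ≠ 0)
    (h3 : Real.sin (ω2 - ω23) ≠ 0) (h4 : Real.sin (ω23 - ω3) ≠ 0)
    (h5 : Real.sin (ω3 - ω13) ≠ 0) (h6 : Real.sin (ω13 - ω1) ≠ 0) :
    multiRatio (Complex.exp (2 * Complex.I * ω1)) (Complex.exp (2 * Complex.I * ω12))
        (Complex.exp (2 * Complex.I * ω2)) (Complex.exp (2 * Complex.I * ω23))
        (Complex.exp (2 * Complex.I * ω3)) (Complex.exp (2 * Complex.I * ω13)) = -1 ↔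
      Real.sin (ω1 - ω12) * Real.sin (ω2 - ω23) * Real.sin (ω3 - ω13) =
        -(Real.sin (ω12 - ω2) * Real.sin (ω23 - ω3) * Real.sin (ω13 - ω1)) := by
  have key : ∀ a b : ℝ, Complex.exp (2*Complex.I*a) - Complex.exp (2*Complex.I*b)
      = 2*Complex.I*Complex.exp (Complex.I*(a+b)) * (Real.sin (a-b) : ℂ) := by
    intro a b
    rw [exp_two_sub]
    congr 1
    push_cast [Complex.ofReal_sin]
    ring_nf
  rw [multiRatio, key, key, key, key, key, key]
  have hexp : ∀ z : ℂ, Complex.exp z ≠ 0 := Complex.exp_ne_zero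
  have hI : (2*Complex.I : ℂ) ≠ 0 := by simp [Complex.I_ne_zero]
  have hc : ∀ x : ℝ, x ≠ 0 → (x : ℂ) ≠ 0 := fun x hx => by exact_mod_cast hx
  have hE : Complex.exp (Complex.I*(↑ω12+↑ω2)) * Complex.exp (Complex.I*(↑ω23+↑ω3))
      * Complex.exp (Complex.I*(↑ω13+↑ω1))
      = Complex.exp (Complex.I*(↑ω1+↑ω12)) * Complex.exp (Complex.I*(↑ω2+↑ω23))
      * Complex.exp (Complex.I*(↑ω3+↑ω13)) := by
    rw [← Complex.exp_add, ← Complex.exp_add, ← Complex.exp_add, ← Complex.exp_add]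
    ring_nf
  rw [div_eq_iff (by
    exact mul_ne_zero (mul_ne_zero
      (mul_ne_zero (mul_ne_zero hI (hexp _)) (hc _ h2))
      (mul_ne_zero (mul_ne_zero hI (hexp _)) (hc _ h4)))
      (mul_ne_zero (mul_ne_zero hI (hexp _)) (hc _ h6)))]
  constructor
  · intro h
    have h' : (↑(Real.sin (ω1 - ω12) * Real.sin (ω2 - ω23) * Real.sin (ω3 - ω13)) : ℂ)
        = ↑(-(Real.sin (ω12 - ω2) * Real.sin (ω23 - ω3) * Real.sin (ω13 - ω1))) := by
      simp only [Complex.ofReal_neg, Complex.ofReal_mul]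
      have hne : (2*Complex.I)^3 * (Complex.exp (Complex.I*(↑ω1+↑ω12)) *
          Complex.exp (Complex.I*(↑ω2+↑ω23)) * Complex.exp (Complex.I*(↑ω3+↑ω13))) ≠ 0 :=
        mul_ne_zero (pow_ne_zero _ hI) (mul_ne_zero (mul_ne_zero (hexp _) (hexp _)) (hexp _))
      apply mul_right_cancel₀ hne
      calc (↑(Real.sin (ω1 - ω12)) : ℂ) * ↑(Real.sin (ω2 - ω23)) * ↑(Real.sin (ω3 - ω13)) *
            ((2*Complex.I)^3 * (Complex.exp (Complex.I*(↑ω1+↑ω12)) *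
            Complex.exp (Complex.I*(↑ω2+↑ω23)) * Complex.exp (Complex.I*(↑ω3+↑ω13))))
          = 2 * Complex.I * Complex.exp (Complex.I * (↑ω1 + ↑ω12)) * ↑(Real.sin (ω1 - ω12)) *
            (2 * Complex.I * Complex.exp (Complex.I * (↑ω2 + ↑ω23)) * ↑(Real.sin (ω2 - ω23))) *
            (2 * Complex.I * Complex.exp (Complex.I * (↑ω3 + ↑ω13)) * ↑(Real.sin (ω3 - ω13))) := by
            ring
        _ = -1 * (2 * Complex.I * Complex.exp (Complex.I * (↑ω12 + ↑ω2)) * ↑(Real.sin (ω12 - ω2)) *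
            (2 * Complex.I * Complex.exp (Complex.I * (↑ω23 + ↑ω3)) * ↑(Real.sin (ω23 - ω3))) *
            (2 * Complex.I * Complex.exp (Complex.I * (↑ω13 + ↑ω1)) * ↑(Real.sin (ω13 - ω1)))) := h
        _ = -(↑(Real.sin (ω12 - ω2)) * ↑(Real.sin (ω23 - ω3)) * ↑(Real.sin (ω13 - ω1))) *
            ((2*Complex.I)^3 * (Complex.exp (Complex.I*(↑ω12+↑ω2)) *
            Complex.exp (Complex.I*(↑ω23+↑ω3)) * Complex.exp (Complex.I*(↑ω13+↑ω1)))) := by ring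
        _ = -(↑(Real.sin (ω12 - ω2)) * ↑(Real.sin (ω23 - ω3)) * ↑(Real.sin (ω13 - ω1))) *
            ((2*Complex.I)^3 * (Complex.exp (Complex.I*(↑ω1+↑ω12)) *
            Complex.exp (Complex.I*(↑ω2+↑ω23)) * Complex.exp (Complex.I*(↑ω3+↑ω13)))) := by
            rw [hE]
    exact_mod_cast h'
  · intro h
    have h' : (↑(Real.sin (ω1 - ω12)) : ℂ) * ↑(Real.sin (ω2 - ω23)) * ↑(Real.sin (ω3 - ω13))
        = -(↑(Real.sin (ω12 - ω2)) * ↑(Real.sin (ω23 - ω3)) * ↑(Real.sin (ω13 - ω1))) := by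
      exact_mod_cast congrArg (Complex.ofReal ·) h
    calc 2 * Complex.I * Complex.exp (Complex.I * (↑ω1 + ↑ω12)) * ↑(Real.sin (ω1 - ω12)) *
          (2 * Complex.I * Complex.exp (Complex.I * (↑ω2 + ↑ω23)) * ↑(Real.sin (ω2 - ω23))) *
          (2 * Complex.I * Complex.exp (Complex.I * (↑ω3 + ↑ω13)) * ↑(Real.sin (ω3 - ω13)))
        = (↑(Real.sin (ω1 - ω12)) * ↑(Real.sin (ω2 - ω23)) * ↑(Real.sin (ω3 - ω13))) *
          ((2*Complex.I)^3 * (Complex.exp (Complex.I*(↑ω1+↑ω12)) *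
          Complex.exp (Complex.I*(↑ω2+↑ω23)) * Complex.exp (Complex.I*(↑ω3+↑ω13)))) := by ring
      _ = -(↑(Real.sin (ω12 - ω2)) * ↑(Real.sin (ω23 - ω3)) * ↑(Real.sin (ω13 - ω1))) *
          ((2*Complex.I)^3 * (Complex.exp (Complex.I*(↑ω12+↑ω2)) *
          Complex.exp (Complex.I*(↑ω23+↑ω3)) * Complex.exp (Complex.I*(↑ω13+↑ω1)))) := by
          rw [h', hE]
      _ = -1 * (2 * Complex.I * Complex.exp (Complex.I * (↑ω12 + ↑ω2)) * ↑(Real.sin (ω12 - ω2)) *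
          (2 * Complex.I * Complex.exp (Complex.I * (↑ω23 + ↑ω3)) * ↑(Real.sin (ω23 - ω3))) *
          (2 * Complex.I * Complex.exp (Complex.I * (↑ω13 + ↑ω1)) * ↑(Real.sin (ω13 - ω1)))) := by
          ring
end

section
/- Let Φ: ℤ³ → ℂ satisfy the discrete Schwarzian KP equation at every lattice point, with all six differences occurring in the multi-ratio and the differences Φ_12−Φ_2, Φ_23−Φ_3, Φ_13−Φ_1 nonzero at every point, and define the shape parameters α = (Φ_12−Φ_1)/(Φ_12−Φ_2), β = (Φ_23−Φ_2)/(Φ_23−Φ_3), γ = (Φ_13−Φ_3)/(Φ_13−Φ_1). Let ρ: ℤ³ → ℂ be nowhere zero and satisfy the adjoint linear system ρ_2 − ρ = α·(ρ_1 − ρ), ρ_3 − ρ = β·(ρ_2 − ρ), ρ_1 − ρ = γ·(ρ_3 − ρ) at every lattice point. Then: (i) for all i ≠ k and every lattice point, ρ·(Φ_i − Φ) + ρ_i·(Φ_ik − Φ_i) = ρ·(Φ_k − Φ) + ρ_k·(Φ_ik − Φ_k), so that the relations Φ′_i − Φ′ = ρ·(Φ_i − Φ) consistently define a bilinear potential Φ′;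 and (ii) any Φ′: ℤ³ → ℂ satisfying Φ′_i − Φ′ = ρ·(Φ_i − Φ) for i = 1,2,3 at every lattice point again satisfies the discrete Schwarzian KP equation at every lattice point. This is the Combescure-type transformation of dSKP lattices. -/
/-- The standard basis vectors of the lattice ℤ³. -/
def ee : Fin 3 → ℤ × ℤ × ℤ := ![(1, 0, 0), (0, 1, 0), (0, 0, 1)]

/-- **Combescure-type transformation of dSKP lattices**: if `ρ` solves the
adjoint linear system built from the shape parameters of a dSKP lattice `Φ`,
then (i) the relations `Φ′_i − Φ′ = ρ·(Φ_i − Φ)` are compatible, and (ii) any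
`Φ′` satisfying them again solves the dSKP equation. -/
theorem dskp_combescure
    (Φ : ℤ × ℤ × ℤ → ℂ)
    (hne : ∀ n : ℤ × ℤ × ℤ,
      Φ (n + e1) - Φ (n + e1 + e2) ≠ 0 ∧ Φ (n + e1 + e2) - Φ (n + e2) ≠ 0 ∧
      Φ (n + e2) - Φ (n + e2 + e3) ≠ 0 ∧ Φ (n + e2 + e3) - Φ (n + e3) ≠ 0 ∧
      Φ (n + e3) - Φ (n + e1 + e3) ≠ 0 ∧ Φ (n + e1 + e3) - Φ (n + e1) ≠ 0)
    (hdskp : ∀ n : ℤ × ℤ × ℤ,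
      multiRatio (Φ (n + e1)) (Φ (n + e1 + e2)) (Φ (n + e2)) (Φ (n + e2 + e3))
        (Φ (n + e3)) (Φ (n + e1 + e3)) = -1)
    (α β γ : ℤ × ℤ × ℤ → ℂ)
    (hα : ∀ n, α n = (Φ (n + e1 + e2) - Φ (n + e1)) / (Φ (n + e1 + e2) - Φ (n + e2)))
    (hβ : ∀ n, β n = (Φ (n + e2 + e3) - Φ (n + e2)) / (Φ (n + e2 + e3) - Φ (n + e3)))
    (hγ : ∀ n, γ n = (Φ (n + e1 + e3) - Φ (n + e3)) / (Φ (n + e1 + e3) - Φ (n + e1)))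
    (ρ : ℤ × ℤ × ℤ → ℂ) (hρ : ∀ n, ρ n ≠ 0)
    (hadj1 : ∀ n, ρ (n + e2) - ρ n = α n * (ρ (n + e1) - ρ n))
    (hadj2 : ∀ n, ρ (n + e3) - ρ n = β n * (ρ (n + e2) - ρ n))
    (hadj3 : ∀ n, ρ (n + e1) - ρ n = γ n * (ρ (n + e3) - ρ n)) :
    (∀ i k : Fin 3, i ≠ k → ∀ n : ℤ × ℤ × ℤ,
      ρ n * (Φ (n + ee i) - Φ n) +
        ρ (n + ee i) * (Φ (n + ee i + ee k) - Φ (n + ee i)) =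
      ρ n * (Φ (n + ee k) - Φ n) +
        ρ (n + ee k) * (Φ (n + ee k + ee i) - Φ (n + ee k))) ∧
    (∀ Φ' : ℤ × ℤ × ℤ → ℂ,
      (∀ i : Fin 3, ∀ n : ℤ × ℤ × ℤ, Φ' (n + ee i) - Φ' n = ρ n * (Φ (n + ee i) - Φ n)) →
      ∀ n : ℤ × ℤ × ℤ,
        multiRatio (Φ' (n + e1)) (Φ' (n + e1 + e2)) (Φ' (n + e2)) (Φ' (n + e2 + e3))
          (Φ' (n + e3)) (Φ' (n + e1 + e3)) = -1) := by
  constructor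
  · -- Part (i)
    have ee0 : ee 0 = e1 := rfl
    have ee1 : ee 1 = e2 := rfl
    have ee2 : ee 2 = e3 := rfl
    have H12 : ∀ n : ℤ × ℤ × ℤ,
        ρ n * (Φ (n + e1) - Φ n) + ρ (n + e1) * (Φ (n + e1 + e2) - Φ (n + e1)) =
        ρ n * (Φ (n + e2) - Φ n) + ρ (n + e2) * (Φ (n + e1 + e2) - Φ (n + e2)) := by
      intro n
      have h := hadj1 n
      rw [hα n, div_mul_eq_mul_div, eq_div_iff (hne n).2.1] at h
      linear_combination -h
    have H23 : ∀ n : ℤ × ℤ × ℤ,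
        ρ n * (Φ (n + e2) - Φ n) + ρ (n + e2) * (Φ (n + e2 + e3) - Φ (n + e2)) =
        ρ n * (Φ (n + e3) - Φ n) + ρ (n + e3) * (Φ (n + e2 + e3) - Φ (n + e3)) := by
      intro n
      have h := hadj2 n
      rw [hβ n, div_mul_eq_mul_div, eq_div_iff (hne n).2.2.2.1] at h
      linear_combination -h
    have H13 : ∀ n : ℤ × ℤ × ℤ,
        ρ n * (Φ (n + e1) - Φ n) + ρ (n + e1) * (Φ (n + e1 + e3) - Φ (n + e1)) =
        ρ n * (Φ (n + e3) - Φ n) + ρ (n + e3) * (Φ (n + e1 + e3) - Φ (n + e3)) := by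
      intro n
      have h := hadj3 n
      rw [hγ n, div_mul_eq_mul_div, eq_div_iff (hne n).2.2.2.2.2] at h
      linear_combination h
    intro i k hik n
    fin_cases i <;> fin_cases k <;>
      first
        | exact absurd rfl hik
        | (show ρ n * (Φ (n + e1) - Φ n) + ρ (n + e1) * (Φ (n + e1 + e2) - Φ (n + e1)) =
              ρ n * (Φ (n + e2) - Φ n) + ρ (n + e2) * (Φ (n + e2 + e1) - Φ (n + e2))
           rw [add_right_comm n e2 e1]; exact H12 n)
        | (show ρ n * (Φ (n + e2) - Φ n) + ρ (n + e2) * (Φ (n + e2 + e1) - Φ (n + e2)) =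
              ρ n * (Φ (n + e1) - Φ n) + ρ (n + e1) * (Φ (n + e1 + e2) - Φ (n + e1))
           rw [add_right_comm n e2 e1]; exact (H12 n).symm)
        | (show ρ n * (Φ (n + e2) - Φ n) + ρ (n + e2) * (Φ (n + e2 + e3) - Φ (n + e2)) =
              ρ n * (Φ (n + e3) - Φ n) + ρ (n + e3) * (Φ (n + e3 + e2) - Φ (n + e3))
           rw [add_right_comm n e3 e2]; exact H23 n)
        | (show ρ n * (Φ (n + e3) - Φ n) + ρ (n + e3) * (Φ (n + e3 + e2) - Φ (n + e3)) =
              ρ n * (Φ (n + e2) - Φ n) + ρ (n + e2) * (Φ (n + e2 + e3) - Φ (n + e2))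
           rw [add_right_comm n e3 e2]; exact (H23 n).symm)
        | (show ρ n * (Φ (n + e1) - Φ n) + ρ (n + e1) * (Φ (n + e1 + e3) - Φ (n + e1)) =
              ρ n * (Φ (n + e3) - Φ n) + ρ (n + e3) * (Φ (n + e3 + e1) - Φ (n + e3))
           rw [add_right_comm n e3 e1]; exact H13 n)
        | (show ρ n * (Φ (n + e3) - Φ n) + ρ (n + e3) * (Φ (n + e3 + e1) - Φ (n + e3)) =
              ρ n * (Φ (n + e1) - Φ n) + ρ (n + e1) * (Φ (n + e1 + e3) - Φ (n + e1))
           rw [add_right_comm n e3 e1]; exact (H13 n).symm)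
  · -- Part (ii)
    intro Φ' hΦ' n
    have h1 : Φ' (n + e1 + e2) - Φ' (n + e1) = ρ (n + e1) * (Φ (n + e1 + e2) - Φ (n + e1)) :=
      hΦ' 1 (n + e1)
    have h2 : Φ' (n + e1 + e2) - Φ' (n + e2) = ρ (n + e2) * (Φ (n + e1 + e2) - Φ (n + e2)) := by
      have h := hΦ' 0 (n + e2)
      rwa [show ee 0 = e1 from rfl, add_right_comm n e2 e1] at h
    have h3 : Φ' (n + e2 + e3) - Φ' (n + e2) = ρ (n + e2) * (Φ (n + e2 + e3) - Φ (n + e2)) :=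
      hΦ' 2 (n + e2)
    have h4 : Φ' (n + e2 + e3) - Φ' (n + e3) = ρ (n + e3) * (Φ (n + e2 + e3) - Φ (n + e3)) := by
      have h := hΦ' 1 (n + e3)
      rwa [show ee 1 = e2 from rfl, add_right_comm n e3 e2] at h
    have h5 : Φ' (n + e1 + e3) - Φ' (n + e3) = ρ (n + e3) * (Φ (n + e1 + e3) - Φ (n + e3)) := by
      have h := hΦ' 0 (n + e3)
      rwa [show ee 0 = e1 from rfl, add_right_comm n e3 e1] at h
    have h6 : Φ' (n + e1 + e3) - Φ' (n + e1) = ρ (n + e1) * (Φ (n + e1 + e3) - Φ (n + e1)) :=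
      hΦ' 2 (n + e1)
    have hD : (Φ (n + e1 + e2) - Φ (n + e2)) * (Φ (n + e2 + e3) - Φ (n + e3)) *
        (Φ (n + e1 + e3) - Φ (n + e1)) ≠ 0 :=
      mul_ne_zero (mul_ne_zero (hne n).2.1 (hne n).2.2.2.1) (hne n).2.2.2.2.2
    have h0 := hdskp n
    rw [multiRatio, div_eq_iff hD] at h0
    have n1 : Φ' (n + e1) - Φ' (n + e1 + e2) =
        ρ (n + e1) * (Φ (n + e1) - Φ (n + e1 + e2)) := by linear_combination -h1
    have n2 : Φ' (n + e2) - Φ' (n + e2 + e3) =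
        ρ (n + e2) * (Φ (n + e2) - Φ (n + e2 + e3)) := by linear_combination -h3
    have n3 : Φ' (n + e3) - Φ' (n + e1 + e3) =
        ρ (n + e3) * (Φ (n + e3) - Φ (n + e1 + e3)) := by linear_combination -h5
    have hD' : (Φ' (n + e1 + e2) - Φ' (n + e2)) * (Φ' (n + e2 + e3) - Φ' (n + e3)) *
        (Φ' (n + e1 + e3) - Φ' (n + e1)) ≠ 0 := by
      rw [h2, h4, h6]
      exact mul_ne_zero (mul_ne_zero (mul_ne_zero (hρ _) (hne n).2.1)
        (mul_ne_zero (hρ _) (hne n).2.2.2.1)) (mul_ne_zero (hρ _) (hne n).2.2.2.2.2)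
    rw [multiRatio, div_eq_iff hD', n1, n2, n3, h2, h4, h6]
    linear_combination (ρ (n + e1) * ρ (n + e2) * ρ (n + e3)) * h0
end
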